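/- arXiv:2001.11940 — 6 statements merged into one kernel-verified Lean document; each statement's English description precedes it below -/
import Mathlib

section
/- Assume the component MAGs M^(1), …, M^(K) are compatible with the same poset. Then the union graph M_∪ is a maximal ancestral graph (MAG). -/
set_option maxHeartbeats 1000000

attribute [local instance] Classical.propDecidable

universe u

/-- A mixed graph: directed edges `dir u v` (u → v) and bidirected edges `bidir u v` (u ↔ v). -/
structure MixedGraph (α : Type u) where
  dir : α → α → Prop
  bidir : α → α → Prop

namespace MixedGraph

variable {α : Type u}

/-- There is a bidirected edge between `u` and `v`. -/
def Bid (G : MixedGraph α) (u v : α) : Prop := G.bidir u v ∨ G.bidir v u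

/-- `u` is an ancestor of `v`: `u = v` or there is a directed path from `u` to `v`. -/
def Anc (G : MixedGraph α) : α → α → Prop := Relation.ReflTransGen G.dir

/-- No directed cycles. -/
def Acyclic (G : MixedGraph α) : Prop := ∀ u v, G.dir u v → ¬ G.Anc v u

/-- An ancestral graph: acyclic, and no endpoint of a bidirected edge is an ancestor
of the other endpoint. -/
def Ancestral (G : MixedGraph α) : Prop :=
  G.Acyclic ∧ ∀ u v, G.Bid u v → ¬ G.Anc u v

/-- `G` is a DAG: acyclic with no bidirected edges. -/
def IsDAG (G : MixedGraph α) : Prop := G.Acyclic ∧ ∀ u v, ¬ G.bidir u v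

/-- `u` and `v` are adjacent (joined by some edge). -/
def Adj (G : MixedGraph α) (u v : α) : Prop :=
  G.dir u v ∨ G.dir v u ∨ G.Bid u v

/-- A walk in a mixed graph, recording for each step which kind of edge is traversed:
`consF` traverses `a → b`, `consB` traverses `b → a` (from `a`'s side),
`consBi` traverses `a ↔ b`. -/
inductive Walk (G : MixedGraph α) : α → α → Type u
  | nil (a : α) : Walk G a a
  | consF {a b c : α} (h : G.dir a b) (w : Walk G b c) : Walk G a c
  | consB {a b c : α} (h : G.dir b a) (w : Walk G b c) : Walk G a c
  | consBi {a b c : α} (h : G.Bid a b) (w : Walk G b c) : Walk G a c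

namespace Walk

variable {G : MixedGraph α}

/-- The list of vertices visited by a walk. -/
def support {a b : α} (w : G.Walk a b) : List α :=
  match a, b, w with
  | a, _, .nil _ => [a]
  | a, _, .consF _ w' => a :: w'.support
  | a, _, .consB _ w' => a :: w'.support
  | a, _, .consBi _ w' => a :: w'.support

/-- A path is a walk whose vertices are pairwise distinct. -/
def IsPath {a b : α} (w : G.Walk a b) : Prop := w.support.Nodup

/-- The first edge of the walk has an arrowhead at the initial vertex. -/
def arrowAtStart {a b : α} (w : G.Walk a b) : Prop :=
  match a, b, w with
  | _, _, .nil _ => False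
  | _, _, .consF _ _ => False
  | _, _, .consB _ _ => True
  | _, _, .consBi _ _ => True

/-- The last edge of the walk has an arrowhead at the final vertex. -/
def arrowAtEnd {a b : α} (w : G.Walk a b) : Prop :=
  match a, b, w with
  | _, _, .nil _ => False
  | _, _, .consF _ (.nil _) => True
  | _, _, .consB _ (.nil _) => False
  | _, _, .consBi _ (.nil _) => True
  | _, _, .consF _ w' => w'.arrowAtEnd
  | _, _, .consB _ w' => w'.arrowAtEnd
  | _, _, .consBi _ w' => w'.arrowAtEnd

/-- The last edge of the walk has a tail at the final vertex. -/
def tailAtEnd {a b : α} (w : G.Walk a b) : Prop :=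
  match a, b, w with
  | _, _, .nil _ => False
  | _, _, .consF _ (.nil _) => False
  | _, _, .consB _ (.nil _) => True
  | _, _, .consBi _ (.nil _) => False
  | _, _, .consF _ w' => w'.tailAtEnd
  | _, _, .consB _ w' => w'.tailAtEnd
  | _, _, .consBi _ w' => w'.tailAtEnd

/-- Number of bidirected edges traversed by the walk. -/
def bidirCount {a b : α} (w : G.Walk a b) : ℕ :=
  match a, b, w with
  | _, _, .nil _ => 0
  | _, _, .consF _ w' => w'.bidirCount
  | _, _, .consB _ w' => w'.bidirCount
  | _, _, .consBi _ w' => w'.bidirCount + 1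

end Walk

/-- The condition for an internal vertex `a` of a path to be active given `C`:
if it is a collider it must be an ancestor of a node of `C`,
and if it is a non-collider it must lie outside `C`. -/
def activeVertex (G : MixedGraph α) (C : Set α) (a : α) (collider : Prop) : Prop :=
  (collider ∧ ∃ z ∈ C, G.Anc a z) ∨ (¬ collider ∧ a ∉ C)

namespace Walk

variable {G : MixedGraph α}

/-- Given that the edge entering the initial vertex of `w` from the previous part of
the path has an arrowhead at it iff `arrowIn`, this checks the activity condition at
that vertex (trivial if `w` is the empty walk, i.e. the vertex is an endpoint). -/
def junctionOK (C : Set α) (arrowIn : Prop) {a b : α} (w : G.Walk a b) : Prop :=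
  match a, b, w with
  | _, _, .nil _ => True
  | a, _, .consF _ _ => G.activeVertex C a (arrowIn ∧ False)
  | a, _, .consB _ _ => G.activeVertex C a (arrowIn ∧ True)
  | a, _, .consBi _ _ => G.activeVertex C a (arrowIn ∧ True)

/-- The walk is d-connecting given `C`: every collider on it is an ancestor of a node
in `C`, and every non-collider on it lies outside `C`. -/
def DConn (C : Set α) {a b : α} (w : G.Walk a b) : Prop :=
  match a, b, w with
  | _, _, .nil _ => True
  | _, _, .consF _ w' => w'.junctionOK C True ∧ w'.DConn C
  | _, _, .consB _ w' => w'.junctionOK C False ∧ w'.DConn C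
  | _, _, .consBi _ w' => w'.junctionOK C True ∧ w'.DConn C

end Walk

/-- `A` and `B` are d-separated given `C`: no path between a node of `A` and a node
of `B` is d-connecting given `C`. -/
def DSep (G : MixedGraph α) (A B C : Set α) : Prop :=
  ∀ ⦃a⦄, a ∈ A → ∀ ⦃b⦄, b ∈ B → ∀ w : G.Walk a b, w.IsPath → ¬ w.DConn C

/-- A maximal ancestral graph: ancestral, and every pair of distinct non-adjacent
vertices is d-separated given some subset of the remaining vertices. -/
def IsMAG (G : MixedGraph α) : Prop :=
  G.Ancestral ∧ ∀ u v, u ≠ v → ¬ G.Adj u v →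
    ∃ C : Set α, u ∉ C ∧ v ∉ C ∧ G.DSep {u} {v} C

end MixedGraph

open MixedGraph

/-- Ancestor relation of a directed edge relation. -/
def AncE {β : Type u} (E : β → β → Prop) : β → β → Prop := Relation.ReflTransGen E

/-- `u` and `v` are distinct children of the marginalized vertex `y = Sum.inr ()`. -/
def chPair {α : Type u} (E : (α ⊕ Unit) → (α ⊕ Unit) → Prop) (u v : α) : Prop :=
  u ≠ v ∧ E (Sum.inr ()) (Sum.inl u) ∧ E (Sum.inr ()) (Sum.inl v)

/-- The marginal ancestral graph of the DAG `E` on `α ⊕ Unit` with respect to the vertex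
`y = Sum.inr ()` (Algorithm 1): keep directed edges among `α`; add `u ↔ v` for distinct
children `u, v` of `y`; for `t → u ∈ E` and added `u ↔ v` with `u` an ancestor of `v`,
add `t → v`; finally replace each added `u ↔ v` with `u ∈ an(v)` by `u → v`. -/
def marginalMAG {α : Type u} (E : (α ⊕ Unit) → (α ⊕ Unit) → Prop) : MixedGraph α where
  dir t v :=
    E (Sum.inl t) (Sum.inl v)
    ∨ (∃ u, E (Sum.inl t) (Sum.inl u) ∧ chPair E u v ∧ AncE E (Sum.inl u) (Sum.inl v))
    ∨ (chPair E t v ∧ AncE E (Sum.inl t) (Sum.inl v))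
  bidir u v :=
    chPair E u v ∧ ¬ AncE E (Sum.inl u) (Sum.inl v) ∧ ¬ AncE E (Sum.inl v) (Sum.inl u)

/-- The mixture DAG on `(Fin K × V) ⊕ Unit`, with `y = Sum.inr ()`: it consists of the
`K` component DAGs placed side by side, plus edges from `y` into every copy of every
node of `W`. -/
def mixtureDAG {V : Type u} (K : ℕ) (E : Fin K → V → V → Prop) (W : Set V) :
    MixedGraph ((Fin K × V) ⊕ Unit) where
  dir x z :=
    (∃ j u v, E j u v ∧ x = Sum.inl (j, u) ∧ z = Sum.inl (j, v)) ∨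
    (∃ j v, v ∈ W ∧ x = Sum.inr () ∧ z = Sum.inl (j, v))
  bidir _ _ := False

/-- The sub-DAG of the mixture DAG induced on the `j`-th copy `V⁽ʲ⁾ ∪ {y}`,
presented as an edge relation on `V ⊕ Unit`. -/
def componentDAGEdges {V : Type u} {K : ℕ} (E : Fin K → V → V → Prop) (W : Set V)
    (j : Fin K) : (V ⊕ Unit) → (V ⊕ Unit) → Prop := fun x z =>
  (∃ u v, E j u v ∧ x = Sum.inl u ∧ z = Sum.inl v) ∨
  (∃ v, v ∈ W ∧ x = Sum.inr () ∧ z = Sum.inl v)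

/-- The component MAG `M⁽ʲ⁾`: the marginal ancestral graph with respect to `y` of the
sub-DAG of the mixture DAG induced on `V⁽ʲ⁾ ∪ {y}`. -/
def componentMAG {V : Type u} {K : ℕ} (E : Fin K → V → V → Prop) (W : Set V)
    (j : Fin K) : MixedGraph V :=
  marginalMAG (componentDAGEdges E W j)

/-- The mixture MAG `M_μ`: the marginal ancestral graph of the mixture DAG with
respect to `y`. -/
def mixtureMAG {V : Type u} (K : ℕ) (E : Fin K → V → V → Prop) (W : Set V) :
    MixedGraph (Fin K × V) :=
  marginalMAG (mixtureDAG K E W).dir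

/-- The union graph `M_∪`: `u → v` iff `u → v` in some `M⁽ʲ⁾`, `u ↔ v` iff `u ↔ v` in
some `M⁽ʲ⁾`. -/
def unionGraph {V : Type u} {K : ℕ} (E : Fin K → V → V → Prop) (W : Set V) :
    MixedGraph V where
  dir u v := ∃ j, (componentMAG E W j).dir u v
  bidir u v := ∃ j, (componentMAG E W j).bidir u v

/-- Poset compatibility of the component MAGs: a strict partial order on `V` such that
ancestry in every `M⁽ʲ⁾` respects the order and endpoints of bidirected edges of every
`M⁽ʲ⁾` are incomparable. -/
def PosetCompatible {V : Type u} {K : ℕ} (E : Fin K → V → V → Prop) (W : Set V) : Prop :=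
  ∃ r : V → V → Prop, IsStrictOrder V r ∧
    (∀ j u v, (componentMAG E W j).Anc u v → u ≠ v → r u v) ∧
    (∀ j u v, (componentMAG E W j).bidir u v → ¬ r u v ∧ ¬ r v u)

/-- `[A]`: all `K` copies of the nodes of `A`, as a subset of the vertices of the
mixture DAG. -/
def liftSet {V : Type u} (K : ℕ) (A : Set V) : Set ((Fin K × V) ⊕ Unit) :=
  {x | ∃ j a, a ∈ A ∧ x = Sum.inl (j, a)}

/-- `[A]` as a subset of `Fin K × V` (the vertices of the mixture MAG `M_μ`). -/
def copySet {V : Type u} (K : ℕ) (A : Set V) : Set (Fin K × V) := {p | p.2 ∈ A}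

/-- `A⁽ʲ⁾` as a subset of the vertices `V ⊕ Unit` of a component sub-DAG. -/
def inlSet {V : Type u} (A : Set V) : Set (V ⊕ Unit) := {x | ∃ a ∈ A, x = Sum.inl a}

/-- Node `v` has different parent sets in different component DAGs. -/
def ParentsVary {V : Type u} {K : ℕ} (E : Fin K → V → V → Prop) (v : V) : Prop :=
  ¬ ∀ j k u, E j u v ↔ E k u v

section Prob

variable {V : Type} [Fintype V] [DecidableEq V] {σ : V → Type} [∀ v, Fintype (σ v)]

/-- The marginal probability of the event that the coordinates in `S` agree with `x`. -/
noncomputable def marg (p : (∀ v, σ v) → ℝ) (S : Set V) (x : ∀ v, σ v) : ℝ :=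
  ∑ y : ∀ v, σ v, if ∀ v ∈ S, y v = x v then p y else 0

/-- The conditional probability `p(x_S | x_C)`. -/
noncomputable def condProb (p : (∀ v, σ v) → ℝ) (S C : Set V) (x : ∀ v, σ v) : ℝ :=
  marg p (S ∪ C) x / marg p C x

/-- Conditional independence `X_A ⟂ X_B | X_C` in `p`:
`p(x_A, x_B | x_C) = p(x_A | x_C) · p(x_B | x_C)` whenever `p(x_C) > 0`. -/
def CondIndep (p : (∀ v, σ v) → ℝ) (A B C : Set V) : Prop :=
  ∀ x, 0 < marg p C x →
    condProb p (A ∪ B) C x = condProb p A C x * condProb p B C x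

/-- A strictly positive probability distribution on the product state space. -/
def IsPositiveDist (p : (∀ v, σ v) → ℝ) : Prop :=
  (∀ x, 0 < p x) ∧ ∑ x, p x = 1

/-- `p` factorizes according to the DAG with directed edge relation `Ed`:
`p(x) = ∏_v p(x_v | x_{pa(v)})`. -/
def Factorizes (p : (∀ v, σ v) → ℝ) (Ed : V → V → Prop) : Prop :=
  ∀ x, p x = ∏ v, condProb p {v} {u | Ed u v} x

/-- Node `v` is invariant: its conditional given its parents is the same function in
all the component distributions. -/
def InvariantNode {K : ℕ} (E : Fin K → V → V → Prop)
    (p : Fin K → (∀ v, σ v) → ℝ) (v : V) : Prop :=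
  ∀ j k x, condProb (p j) {v} {u | E j u v} x = condProb (p k) {v} {u | E k u v} x

end Prob


/-! ### Auxiliary lemmas for Statement 2 -/

section Aux

variable {α : Type u} {G : MixedGraph α}

lemma walk_start_mem {a b : α} (w : G.Walk a b) : a ∈ w.support := by
  cases w <;> simp [Walk.support]

lemma walk_end_mem {a b : α} (w : G.Walk a b) : b ∈ w.support := by
  induction w with
  | nil a => simp [Walk.support]
  | consF h w ih => simpa [Walk.support] using Or.inr ih
  | consB h w ih => simpa [Walk.support] using Or.inr ih
  | consBi h w ih => simpa [Walk.support] using Or.inr ih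

lemma cons_ne_end {a n b : α} (w3 : G.Walk n b) (h : (a :: w3.support).Nodup) : a ≠ b :=
  fun e => (List.nodup_cons.1 h).1 (e ▸ walk_end_mem w3)

/-- If a vertex `n` heads a sub-walk with an arrowhead coming in, and the walk is
d-connecting, then `n` is "good". -/
lemma headGood (C : Set α) (Good : α → Prop)
    (hstep : ∀ x y, G.dir x y → Good y → Good x)
    (hC : ∀ x z, z ∈ C → G.Anc x z → Good x) :
    ∀ {n b : α} (w : G.Walk n b), w.DConn C → Good b → w.junctionOK C True → Good n := by
  intro n b w
  induction w with
  | nil a => intro _ hb _; exact hb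
  | consF h w ih =>
    intro hd hb _
    exact hstep _ _ h (ih hd.2 hb hd.1)
  | consB h w ih =>
    intro hd hb hj
    rcases hj with ⟨_, z, hz, hanc⟩ | ⟨hnc, _⟩
    · exact hC _ z hz hanc
    · exact absurd ⟨trivial, trivial⟩ hnc
  | consBi h w ih =>
    intro hd hb hj
    rcases hj with ⟨_, z, hz, hanc⟩ | ⟨hnc, _⟩
    · exact hC _ z hz hanc
    · exact absurd ⟨trivial, trivial⟩ hnc

/-- Every vertex on a d-connecting walk between good endpoints is good. -/
lemma allGood (C : Set α) (Good : α → Prop)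
    (hstep : ∀ x y, G.dir x y → Good y → Good x)
    (hC : ∀ x z, z ∈ C → G.Anc x z → Good x) :
    ∀ {a b : α} (w : G.Walk a b), w.DConn C → Good a → Good b →
      ∀ x ∈ w.support, Good x := by
  intro a b w
  induction w with
  | nil a =>
    intro _ ha _ x hx
    simp only [Walk.support, List.mem_cons, List.not_mem_nil, or_false] at hx
    subst hx; exact ha
  | consF h w ih =>
    intro hd ha hb x hx
    simp only [Walk.support, List.mem_cons] at hx
    rcases hx with rfl | hx
    · exact ha
    · exact ih hd.2 (headGood C Good hstep hC w hd.2 hb hd.1) hb x hx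
  | consB h w ih =>
    intro hd ha hb x hx
    simp only [Walk.support, List.mem_cons] at hx
    rcases hx with rfl | hx
    · exact ha
    · exact ih hd.2 (hstep _ _ h ha) hb x hx
  | consBi h w ih =>
    intro hd ha hb x hx
    simp only [Walk.support, List.mem_cons] at hx
    rcases hx with rfl | hx
    · exact ha
    · exact ih hd.2 (headGood C Good hstep hC w hd.2 hb hd.1) hb x hx

end Aux

section CompAux

variable {V : Type u} {K : ℕ}

lemma ancE_inl_inl (E : Fin K → V → V → Prop) (W : Set V) (j : Fin K) {a : V}
    {z : V ⊕ Unit} (h : AncE (componentDAGEdges E W j) (Sum.inl a) z) :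
    ∃ b, z = Sum.inl b ∧ Relation.ReflTransGen (E j) a b := by
  induction h with
  | refl => exact ⟨a, rfl, .refl⟩
  | tail hmz e ih =>
    obtain ⟨b', rfl, hr⟩ := ih
    rcases e with ⟨u', v', he, hm, hc⟩ | ⟨v', _, hm, hc⟩
    · rcases Sum.inl.inj hm with rfl
      exact ⟨v', hc, hr.tail he⟩
    · exact absurd hm (by simp)

lemma rtg_to_ancE (E : Fin K → V → V → Prop) (W : Set V) (j : Fin K) {a b : V}
    (h : Relation.ReflTransGen (E j) a b) :
    AncE (componentDAGEdges E W j) (Sum.inl a) (Sum.inl b) :=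
  Relation.ReflTransGen.lift Sum.inl
    (fun x y hxy => Or.inl ⟨x, y, hxy, rfl, rfl⟩) _ _ h

lemma rtg_to_compAnc (E : Fin K → V → V → Prop) (W : Set V) (j : Fin K) {a b : V}
    (h : Relation.ReflTransGen (E j) a b) : (componentMAG E W j).Anc a b :=
  Relation.ReflTransGen.mono
    (fun x y hxy => Or.inl (Or.inl ⟨x, y, hxy, rfl, rfl⟩)) _ _ h

lemma comp_dir_transGen (E : Fin K → V → V → Prop) (W : Set V) (j : Fin K) {a b : V}
    (h : (componentMAG E W j).dir a b) : Relation.TransGen (E j) a b := by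
  rcases h with h | ⟨u', h1, h2, h3⟩ | ⟨h1, h2⟩
  · rcases h with ⟨u', v', he, hu, hv⟩ | ⟨v', _, hu, _⟩
    · rcases Sum.inl.inj hu with rfl; rcases Sum.inl.inj hv with rfl
      exact Relation.TransGen.single he
    · exact absurd hu (by simp)
  · rcases h1 with ⟨u'', v'', he, hu, hv⟩ | ⟨v', _, hu, _⟩
    · rcases Sum.inl.inj hu with rfl; rcases Sum.inl.inj hv with rfl
      obtain ⟨b', hb', hr⟩ := ancE_inl_inl E W j h3
      rcases Sum.inl.inj hb' with rfl
      exact Relation.TransGen.head' he hr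
    · exact absurd hu (by simp)
  · obtain ⟨b', hb', hr⟩ := ancE_inl_inl E W j h2
    rcases Sum.inl.inj hb' with rfl
    rcases Relation.reflTransGen_iff_eq_or_transGen.mp hr with rfl | htg
    · exact absurd rfl h1.1
    · exact htg

lemma comp_bidir_facts (E : Fin K → V → V → Prop) (W : Set V) (j : Fin K) {a b : V}
    (h : (componentMAG E W j).bidir a b) :
    a ≠ b ∧ a ∈ W ∧ b ∈ W ∧ ¬ Relation.ReflTransGen (E j) a b ∧
      ¬ Relation.ReflTransGen (E j) b a := by
  obtain ⟨⟨hne, hya, hyb⟩, hnab, hnba⟩ := h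
  have hWmem : ∀ c : V, componentDAGEdges E W j (Sum.inr ()) (Sum.inl c) → c ∈ W := by
    intro c hc
    rcases hc with ⟨u', v', _, hu, _⟩ | ⟨v', hvW, _, hv⟩
    · exact absurd hu (by simp)
    · rcases Sum.inl.inj hv with rfl; exact hvW
  exact ⟨hne, hWmem a hya, hWmem b hyb,
    fun hr => hnab (rtg_to_ancE E W j hr), fun hr => hnba (rtg_to_ancE E W j hr)⟩

lemma chPair_of_W (E : Fin K → V → V → Prop) (W : Set V) (j : Fin K) {a b : V}
    (hne : a ≠ b) (ha : a ∈ W) (hb : b ∈ W) : chPair (componentDAGEdges E W j) a b :=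
  ⟨hne, Or.inr ⟨a, ha, rfl, rfl⟩, Or.inr ⟨b, hb, rfl, rfl⟩⟩

end CompAux


lemma transGen_head_decomp {α : Type u} {rel : α → α → Prop} {a b : α}
    (h : Relation.TransGen rel a b) : ∃ c, rel a c ∧ Relation.ReflTransGen rel c b := by
  induction h with
  | single h => exact ⟨_, h, .refl⟩
  | tail h e ih =>
    obtain ⟨c, hc, hcb⟩ := ih
    exact ⟨c, hc, hcb.tail e⟩

lemma junctionOK_notC {α : Type u} {G : MixedGraph α} {C : Set α} {n b : α}
    {w : G.Walk n b} {P : Prop} (hnP : ¬ P) (hj : w.junctionOK C P) : n = b ∨ n ∉ C := by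
  cases w with
  | nil => exact Or.inl rfl
  | consF h w => rcases hj with ⟨⟨hp, _⟩, _⟩ | ⟨_, h'⟩
                 · exact absurd hp hnP
                 · exact Or.inr h'
  | consB h w => rcases hj with ⟨⟨hp, _⟩, _⟩ | ⟨_, h'⟩
                 · exact absurd hp hnP
                 · exact Or.inr h'
  | consBi h w => rcases hj with ⟨⟨hp, _⟩, _⟩ | ⟨_, h'⟩
                  · exact absurd hp hnP
                  · exact Or.inr h'

lemma junctionOK_consF_notC {α : Type u} {G : MixedGraph α} {C : Set α} {a n b : α}
    {h : G.dir a n} {w : G.Walk n b} {P : Prop}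
    (hj : (Walk.consF h w).junctionOK C P) : a ∉ C := by
  rcases hj with ⟨⟨_, hf⟩, _⟩ | ⟨_, h'⟩
  · exact hf.elim
  · exact h'

/-- under poset compatibility of the component MAGs, the union graph
`M_∪` is a maximal ancestral graph. -/
theorem unionGraph_isMAG
    {V : Type u} {K : ℕ} (E : Fin K → V → V → Prop)
    (hdag : ∀ j, (MixedGraph.mk (E j) (fun _ _ => False)).Acyclic)
    (W : Set V) (hW : ∀ v, ParentsVary E v → v ∈ W)
    (hcomp : PosetCompatible E W) :
    (unionGraph E W).IsMAG := by
  obtain ⟨r, hso, hancr, hbidr⟩ := hcomp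
  have hirr : ∀ a, ¬ r a a := hso.toIrrefl.irrefl
  have htr : ∀ a b c, r a b → r b c → r a c := fun a b c => hso.toIsTrans.trans a b c
  have hasym : ∀ a b, r a b → ¬ r b a := fun a b h1 h2 => hirr a (htr _ _ _ h1 h2)
  set G := unionGraph E W with hGdef
  -- no directed self-ancestry in component DAGs
  have htgirr : ∀ (j : Fin K) (a : V), ¬ Relation.TransGen (E j) a a := by
    intro j a h
    obtain ⟨c, hc, hca⟩ := transGen_head_decomp h
    exact hdag j a c hc hca
  have hrtg_r : ∀ (j : Fin K) (a b : V), Relation.ReflTransGen (E j) a b → a ≠ b → r a b :=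
    fun j a b h hne => hancr j a b (rtg_to_compAnc E W j h) hne
  have hdrc : ∀ (j : Fin K) (a b : V), (componentMAG E W j).dir a b → r a b := by
    intro j a b h
    have htg := comp_dir_transGen E W j h
    have hne : a ≠ b := by rintro rfl; exact htgirr j a htg
    exact hancr j a b (Relation.ReflTransGen.single h) hne
  have hdr : ∀ a b, G.dir a b → r a b := by rintro a b ⟨j, h⟩; exact hdrc j a b h
  have hancu : ∀ a b, G.Anc a b → a = b ∨ r a b := by
    intro a b h
    clear hW
    induction h with
    | refl => exact Or.inl rfl
    | tail h e ih =>
      right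
      rcases ih with rfl | hr
      · exact hdr _ _ e
      · exact htr _ _ _ hr (hdr _ _ e)
  have hbidu : ∀ a b, G.Bid a b →
      a ≠ b ∧ a ∈ W ∧ b ∈ W ∧ ¬ r a b ∧ ¬ r b a ∧ Nonempty (Fin K) := by
    intro a b h
    rcases h with ⟨j, h⟩ | ⟨j, h⟩
    · obtain ⟨hne, haW, hbW, -, -⟩ := comp_bidir_facts E W j h
      obtain ⟨h1, h2⟩ := hbidr j a b h
      exact ⟨hne, haW, hbW, h1, h2, ⟨j⟩⟩
    · obtain ⟨hne, hbW, haW, -, -⟩ := comp_bidir_facts E W j h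
      obtain ⟨h1, h2⟩ := hbidr j b a h
      exact ⟨hne.symm, haW, hbW, h2, h1, ⟨j⟩⟩
  have hclique : ∀ (j : Fin K) (a b : V), a ≠ b → a ∈ W → b ∈ W → G.Adj a b := by
    intro j a b hne haW hbW
    have key : ∀ (x y : V), x ≠ y → x ∈ W → y ∈ W → r x y → (componentMAG E W j).dir x y := by
      intro x y hxy hxW hyW hrxy
      have hrtg : Relation.ReflTransGen (E j) x y := by
        by_contra hno
        have hno' : ¬ Relation.ReflTransGen (E j) y x := fun h2 =>
          hasym _ _ hrxy (hrtg_r j y x h2 (Ne.symm hxy))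
        have hb : (componentMAG E W j).bidir x y := by
          refine ⟨chPair_of_W E W j hxy hxW hyW, ?_, ?_⟩
          · intro h
            obtain ⟨b', hb', hr⟩ := ancE_inl_inl E W j h
            rcases Sum.inl.inj hb' with rfl
            exact hno hr
          · intro h
            obtain ⟨b', hb', hr⟩ := ancE_inl_inl E W j h
            rcases Sum.inl.inj hb' with rfl
            exact hno' hr
        exact (hbidr j x y hb).1 hrxy
      exact Or.inr (Or.inr ⟨chPair_of_W E W j hxy hxW hyW, rtg_to_ancE E W j hrtg⟩)
    by_cases h1 : r a b
    · exact Or.inl ⟨j, key a b hne haW hbW h1⟩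
    · by_cases h2 : r b a
      · exact Or.inr (Or.inl ⟨j, key b a (Ne.symm hne) hbW haW h2⟩)
      · refine Or.inr (Or.inr (Or.inl ⟨j, ⟨chPair_of_W E W j hne haW hbW, ?_, ?_⟩⟩))
        · intro h
          obtain ⟨b', hb', hr⟩ := ancE_inl_inl E W j h
          rcases Sum.inl.inj hb' with rfl
          exact h1 (hrtg_r j a b hr hne)
        · intro h
          obtain ⟨b', hb', hr⟩ := ancE_inl_inl E W j h
          rcases Sum.inl.inj hb' with rfl
          exact h2 (hrtg_r j b a hr (Ne.symm hne))
  constructor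
  · constructor
    · intro a b hd hanc
      have h1 := hdr a b hd
      rcases hancu b a hanc with rfl | h2
      · exact hirr _ h1
      · exact hasym _ _ h1 h2
    · intro a b hb hanc
      obtain ⟨hne, -, -, h1, -, -⟩ := hbidu a b hb
      rcases hancu a b hanc with rfl | h3
      · exact hne rfl
      · exact h1 h3
  · intro uu vv hne hAdj
    refine ⟨{z | z ≠ uu ∧ z ≠ vv ∧ (G.Anc z uu ∨ G.Anc z vv)},
      fun h => h.1 rfl, fun h => h.2.1 rfl, ?_⟩
    set C : Set V := {z | z ≠ uu ∧ z ≠ vv ∧ (G.Anc z uu ∨ G.Anc z vv)} with hCdef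
    intro a ha b hb w hpath hconn
    have ha' : uu = a := (ha : a = uu).symm
    subst ha'
    have hb' : vv = b := (hb : b = vv).symm
    subst hb'
    have hstep : ∀ x y, G.dir x y → (G.Anc y uu ∨ G.Anc y vv) → (G.Anc x uu ∨ G.Anc x vv) := by
      intro x y hxy hy
      rcases hy with h | h
      · exact Or.inl (Relation.ReflTransGen.head hxy h)
      · exact Or.inr (Relation.ReflTransGen.head hxy h)
    have hCgood : ∀ x z, z ∈ C → G.Anc x z → (G.Anc x uu ∨ G.Anc x vv) := by
      intro x z hz hxz
      rcases hz.2.2 with h | h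
      · exact Or.inl (hxz.trans h)
      · exact Or.inr (hxz.trans h)
    have hgood : ∀ x ∈ w.support, (G.Anc x uu ∨ G.Anc x vv) :=
      allGood C _ hstep hCgood w hconn (Or.inl .refl) (Or.inr .refl)
    have hGr : ∀ x, x ≠ uu → x ≠ vv → (G.Anc x uu ∨ G.Anc x vv) → r x uu ∨ r x vv := by
      intro x hxu hxv hx
      rcases hx with h | h
      · rcases hancu _ _ h with rfl | hr
        · exact absurd rfl hxu
        · exact Or.inl hr
      · rcases hancu _ _ h with rfl | hr
        · exact absurd rfl hxv
        · exact Or.inr hr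
    have hGC : ∀ x, x ≠ uu → x ≠ vv → (G.Anc x uu ∨ G.Anc x vv) → x ∈ C :=
      fun x h1 h2 h3 => ⟨h1, h2, h3⟩
    simp only [Walk.IsPath] at hpath
    -- the chain lemma
    have chain : ∀ (hLP : r uu vv ∨ (uu ∈ W ∧ ∃ w0, ¬ r w0 uu ∧ r w0 vv)),
        ∀ (x y : V) (w' : G.Walk x y), y = vv → w'.DConn C → w'.junctionOK C True →
        (∀ z ∈ w'.support, (G.Anc z uu ∨ G.Anc z vv)) → uu ∉ w'.support →
        w'.support.Nodup → x ≠ vv → False := by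
      intro hLP x y w'
      induction w' with
      | nil a =>
        intro hyv _ _ _ _ _ hxv
        exact hxv hyv
      | consF h w'' ih =>
        rename_i a m c
        intro hyv hd hj hg hu hnd hxv
        have hau : a ≠ uu := fun e => hu (e ▸ walk_start_mem _)
        exact junctionOK_consF_notC hj (hGC a hau hxv (hg a (walk_start_mem _)))
      | consB h w'' ih =>
        rename_i a m c
        intro hyv hd hj hg hu hnd hxv
        have hyv' := hyv.symm
        subst hyv'
        cases w'' with
        | nil =>
          -- final edge vv → a
          have hrva : r vv a := hdr _ _ h
          have hau : a ≠ uu := fun e => hu (e ▸ walk_start_mem _)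
          rcases hGr a hau hxv (hg a (walk_start_mem _)) with hau' | hav'
          · have hrvu : r vv uu := htr _ _ _ hrva hau'
            rcases hLP with h1 | ⟨-, w0, hw0u, hw0v⟩
            · exact hasym _ _ h1 hrvu
            · exact hw0u (htr _ _ _ hw0v hrvu)
          · exact hasym _ _ hrva hav'
        | consF h2 w3 =>
          rcases List.nodup_cons.1 hnd with ⟨hu1, hnd1⟩
          have hmu : m ≠ uu := fun e => hu (by simp [Walk.support, e])
          have hmv : m ≠ vv := cons_ne_end w3 hnd1
          have hmC : m ∈ C := hGC m hmu hmv (hg m (by simp [Walk.support]))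
          rcases junctionOK_notC not_false hd.1 with h' | h'
          · exact hmv h'
          · exact h' hmC
        | consB h2 w3 =>
          rcases List.nodup_cons.1 hnd with ⟨hu1, hnd1⟩
          have hmu : m ≠ uu := fun e => hu (by simp [Walk.support, e])
          have hmv : m ≠ vv := cons_ne_end w3 hnd1
          have hmC : m ∈ C := hGC m hmu hmv (hg m (by simp [Walk.support]))
          rcases junctionOK_notC not_false hd.1 with h' | h'
          · exact hmv h'
          · exact h' hmC
        | consBi h2 w3 =>
          rcases List.nodup_cons.1 hnd with ⟨hu1, hnd1⟩
          have hmu : m ≠ uu := fun e => hu (by simp [Walk.support, e])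
          have hmv : m ≠ vv := cons_ne_end w3 hnd1
          have hmC : m ∈ C := hGC m hmu hmv (hg m (by simp [Walk.support]))
          rcases junctionOK_notC not_false hd.1 with h' | h'
          · exact hmv h'
          · exact h' hmC
      | consBi h w'' ih =>
        rename_i a m c
        intro hyv hd hj hg hu hnd hxv
        have hyv' := hyv.symm
        subst hyv'
        cases w'' with
        | nil =>
          -- final edge a ↔ vv
          obtain ⟨hnav, haW, hvW, hnr1, hnr2, hK⟩ := hbidu a vv h
          have hau : a ≠ uu := fun e => hu (e ▸ walk_start_mem _)
          rcases hGr a hau hxv (hg a (walk_start_mem _)) with hau' | hav'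
          · rcases hLP with h1 | ⟨huW, -⟩
            · exact hnr1 (htr _ _ _ hau' h1)
            · exact hAdj (hclique hK.some uu vv hne huW hvW)
          · exact hnr1 hav'
        | consF h2 w3 =>
          rcases List.nodup_cons.1 hnd with ⟨ha1, hnd1⟩
          exact ih rfl hd.2 hd.1 (fun z hz => hg z (List.mem_cons_of_mem _ hz))
            (fun hm => hu (List.mem_cons_of_mem _ hm)) hnd1 (cons_ne_end w3 hnd1)
        | consB h2 w3 =>
          rcases List.nodup_cons.1 hnd with ⟨ha1, hnd1⟩
          exact ih rfl hd.2 hd.1 (fun z hz => hg z (List.mem_cons_of_mem _ hz))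
            (fun hm => hu (List.mem_cons_of_mem _ hm)) hnd1 (cons_ne_end w3 hnd1)
        | consBi h2 w3 =>
          rcases List.nodup_cons.1 hnd with ⟨ha1, hnd1⟩
          exact ih rfl hd.2 hd.1 (fun z hz => hg z (List.mem_cons_of_mem _ hz))
            (fun hm => hu (List.mem_cons_of_mem _ hm)) hnd1 (cons_ne_end w3 hnd1)
    -- assemble: case on the first edge of the walk
    cases w with
    | nil => exact hne rfl
    | consF h w' =>
      rename_i n
      rcases List.nodup_cons.1 hpath with ⟨hu1, hnd1⟩
      cases w' with
      | nil => exact hAdj (Or.inl h)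
      | consF h2 w3 =>
        have hnu : n ≠ uu := fun e => hu1 (e ▸ walk_start_mem _)
        have hnv : n ≠ vv := cons_ne_end w3 hnd1
        have hrun : r uu n := hdr _ _ h
        rcases hGr n hnu hnv (hgood n (by simp [Walk.support])) with h' | h'
        · exact hasym _ _ hrun h'
        · exact chain (Or.inl (htr _ _ _ hrun h')) n vv _ rfl hconn.2 hconn.1
            (fun z hz => hgood z (List.mem_cons_of_mem _ hz)) hu1 hnd1 hnv
      | consB h2 w3 =>
        have hnu : n ≠ uu := fun e => hu1 (e ▸ walk_start_mem _)
        have hnv : n ≠ vv := cons_ne_end w3 hnd1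
        have hrun : r uu n := hdr _ _ h
        rcases hGr n hnu hnv (hgood n (by simp [Walk.support])) with h' | h'
        · exact hasym _ _ hrun h'
        · exact chain (Or.inl (htr _ _ _ hrun h')) n vv _ rfl hconn.2 hconn.1
            (fun z hz => hgood z (List.mem_cons_of_mem _ hz)) hu1 hnd1 hnv
      | consBi h2 w3 =>
        have hnu : n ≠ uu := fun e => hu1 (e ▸ walk_start_mem _)
        have hnv : n ≠ vv := cons_ne_end w3 hnd1
        have hrun : r uu n := hdr _ _ h
        rcases hGr n hnu hnv (hgood n (by simp [Walk.support])) with h' | h'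
        · exact hasym _ _ hrun h'
        · exact chain (Or.inl (htr _ _ _ hrun h')) n vv _ rfl hconn.2 hconn.1
            (fun z hz => hgood z (List.mem_cons_of_mem _ hz)) hu1 hnd1 hnv
    | consB h w' =>
      rename_i n
      rcases List.nodup_cons.1 hpath with ⟨hu1, hnd1⟩
      cases w' with
      | nil => exact hAdj (Or.inr (Or.inl h))
      | consF h2 w3 =>
        have hnu : n ≠ uu := fun e => hu1 (e ▸ walk_start_mem _)
        have hnv : n ≠ vv := cons_ne_end w3 hnd1
        have hnC : n ∈ C := hGC n hnu hnv (hgood n (by simp [Walk.support]))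
        rcases junctionOK_notC not_false hconn.1 with h' | h'
        · exact hnv h'
        · exact h' hnC
      | consB h2 w3 =>
        have hnu : n ≠ uu := fun e => hu1 (e ▸ walk_start_mem _)
        have hnv : n ≠ vv := cons_ne_end w3 hnd1
        have hnC : n ∈ C := hGC n hnu hnv (hgood n (by simp [Walk.support]))
        rcases junctionOK_notC not_false hconn.1 with h' | h'
        · exact hnv h'
        · exact h' hnC
      | consBi h2 w3 =>
        have hnu : n ≠ uu := fun e => hu1 (e ▸ walk_start_mem _)
        have hnv : n ≠ vv := cons_ne_end w3 hnd1
        have hnC : n ∈ C := hGC n hnu hnv (hgood n (by simp [Walk.support]))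
        rcases junctionOK_notC not_false hconn.1 with h' | h'
        · exact hnv h'
        · exact h' hnC
    | consBi h w' =>
      rename_i n
      rcases List.nodup_cons.1 hpath with ⟨hu1, hnd1⟩
      cases w' with
      | nil => exact hAdj (Or.inr (Or.inr h))
      | consF h2 w3 =>
        obtain ⟨hneun, huW, hnW, hnr1, hnr2, hK⟩ := hbidu uu n h
        have hnu : n ≠ uu := Ne.symm hneun
        have hnv : n ≠ vv := cons_ne_end w3 hnd1
        rcases hGr n hnu hnv (hgood n (by simp [Walk.support])) with h' | h'
        · exact hnr2 h'
        · exact chain (Or.inr ⟨huW, n, hnr2, h'⟩) n vv _ rfl hconn.2 hconn.1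
            (fun z hz => hgood z (List.mem_cons_of_mem _ hz)) hu1 hnd1 hnv
      | consB h2 w3 =>
        obtain ⟨hneun, huW, hnW, hnr1, hnr2, hK⟩ := hbidu uu n h
        have hnu : n ≠ uu := Ne.symm hneun
        have hnv : n ≠ vv := cons_ne_end w3 hnd1
        rcases hGr n hnu hnv (hgood n (by simp [Walk.support])) with h' | h'
        · exact hnr2 h'
        · exact chain (Or.inr ⟨huW, n, hnr2, h'⟩) n vv _ rfl hconn.2 hconn.1
            (fun z hz => hgood z (List.mem_cons_of_mem _ hz)) hu1 hnd1 hnv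
      | consBi h2 w3 =>
        obtain ⟨hneun, huW, hnW, hnr1, hnr2, hK⟩ := hbidu uu n h
        have hnu : n ≠ uu := Ne.symm hneun
        have hnv : n ≠ vv := cons_ne_end w3 hnd1
        rcases hGr n hnu hnv (hgood n (by simp [Walk.support])) with h' | h'
        · exact hnr2 h'
        · exact chain (Or.inr ⟨huW, n, hnr2, h'⟩) n vv _ rfl hconn.2 hconn.1
            (fun z hz => hgood z (List.mem_cons_of_mem _ hz)) hu1 hnd1 hnv
end

section
/- Let D = (V ∪ {y}, E) be a DAG in which the vertex y has in-degree 0. Then the marginal ancestral graph of D with respect to y is a maximal ancestral graph (MAG): it is ancestral, and every pair of non-adjacent vertices is d-separated given some subset of the remaining vertices. -/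
set_option maxHeartbeats 1000000

attribute [local instance] Classical.propDecidable

universe u

open MixedGraph

section MargAux

open Relation MixedGraph

variable {α : Type u} {E : (α ⊕ Unit) → (α ⊕ Unit) → Prop}

/-- edge relation of the DAG restricted to `α`. -/
def Fr (E : (α ⊕ Unit) → (α ⊕ Unit) → Prop) : α → α → Prop :=
  fun a b => E (Sum.inl a) (Sum.inl b)

lemma reach_inr (hy : ∀ x, ¬ E x (Sum.inr ())) {x : α ⊕ Unit}
    (h : Relation.ReflTransGen E x (Sum.inr ())) : x = Sum.inr () := by
  rcases h.cases_tail with h | ⟨c, _, hc⟩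
  · exact h.symm
  · exact absurd hc (hy c)

lemma anc_of_inl (hy : ∀ x, ¬ E x (Sum.inr ())) {a : α} {x : α ⊕ Unit}
    (h : Relation.ReflTransGen E (Sum.inl a) x) :
    ∀ b : α, x = Sum.inl b → Relation.ReflTransGen (Fr E) a b := by
  induction h with
  | refl =>
      intro b hb
      injection hb with hb
      subst hb
      exact ReflTransGen.refl
  | tail h1 h2 ih =>
      rename_i c d
      intro b hb
      subst hb
      cases c with
      | inl c' => exact (ih c' rfl).tail h2
      | inr uu =>
          cases uu
          have := reach_inr hy h1
          exact absurd this (by simp)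

lemma anc_inl (hy : ∀ x, ¬ E x (Sum.inr ())) {a b : α} :
    Relation.ReflTransGen E (Sum.inl a) (Sum.inl b) ↔ Relation.ReflTransGen (Fr E) a b :=
  ⟨fun h => anc_of_inl hy h b rfl,
   fun h => Relation.ReflTransGen.lift Sum.inl (fun _ _ hh => hh) _ _ h⟩

lemma no_cycle (hdag : (MixedGraph.mk E (fun _ _ => False)).Acyclic)
    {a : α} (h : Relation.TransGen (Fr E) a a) : False := by
  cases h with
  | single h' =>
      exact hdag (Sum.inl a) (Sum.inl a) h' ReflTransGen.refl
  | tail h' e =>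
      rename_i b
      exact hdag (Sum.inl b) (Sum.inl a) e
        (Relation.ReflTransGen.lift Sum.inl (fun _ _ hh => hh) _ _ h'.to_reflTransGen)

lemma dir_anc (hy : ∀ x, ¬ E x (Sum.inr ())) {t z : α}
    (h : (marginalMAG E).dir t z) : Relation.TransGen (Fr E) t z := by
  rcases h with h | ⟨w0, hw, hch, hanc⟩ | ⟨hch, hanc⟩
  · exact TransGen.single h
  · exact TransGen.head' hw ((anc_inl hy).mp hanc)
  · rcases ((anc_inl hy).mp hanc).cases_head with h' | ⟨c, hc, hcz⟩
    · exact absurd h' hch.1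
    · exact TransGen.head' hc hcz

lemma ancM_anc (hy : ∀ x, ¬ E x (Sum.inr ())) {a b : α}
    (h : (marginalMAG E).Anc a b) : Relation.ReflTransGen (Fr E) a b := by
  induction h with
  | refl => exact ReflTransGen.refl
  | tail _ h2 ih => exact ih.trans (dir_anc hy h2).to_reflTransGen

lemma bid_info {a b : α} (h : (marginalMAG E).Bid a b) :
    a ≠ b ∧ E (Sum.inr ()) (Sum.inl a) ∧ E (Sum.inr ()) (Sum.inl b) ∧
      ¬ Relation.ReflTransGen E (Sum.inl a) (Sum.inl b) ∧
      ¬ Relation.ReflTransGen E (Sum.inl b) (Sum.inl a) := by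
  rcases h with ⟨⟨hne, h1, h2⟩, h3, h4⟩ | ⟨⟨hne, h1, h2⟩, h3, h4⟩
  exacts [⟨hne, h1, h2, h3, h4⟩, ⟨hne.symm, h2, h1, h4, h3⟩]

/-- The separating set `an({u,v}) \ {u,v}`. -/
def sep (E : (α ⊕ Unit) → (α ⊕ Unit) → Prop) (u v : α) : Set α :=
  {z | z ≠ u ∧ z ≠ v ∧ (Relation.ReflTransGen (Fr E) z u ∨ Relation.ReflTransGen (Fr E) z v)}

lemma collider_anc (hy : ∀ x, ¬ E x (Sum.inr ())) {u v a : α} {P : Prop}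
    (h : (marginalMAG E).activeVertex (sep E u v) a P) (hP : P) :
    Relation.ReflTransGen (Fr E) a u ∨ Relation.ReflTransGen (Fr E) a v := by
  rcases h with ⟨_, z, hz, hanc⟩ | ⟨hnp, _⟩
  · have hza := ancM_anc hy hanc
    rcases hz.2.2 with h1 | h1
    · exact Or.inl (hza.trans h1)
    · exact Or.inr (hza.trans h1)
  · exact absurd hP hnp

lemma notC_of_noncollider {G : MixedGraph α} {C : Set α} {a : α} {P : Prop}
    (h : G.activeVertex C a P) (hnp : ¬ P) : a ∉ C := by
  rcases h with ⟨hp, _⟩ | ⟨_, h⟩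
  exacts [absurd hp hnp, h]

lemma start_mem_support {G : MixedGraph α} : ∀ {a b : α} (w : G.Walk a b),
    a ∈ w.support := by
  intro a b w
  cases w <;> simp [Walk.support]

lemma end_mem_support {G : MixedGraph α} : ∀ {a b : α} (w : G.Walk a b),
    b ∈ w.support := by
  intro a b w
  induction w with
  | nil a => simp [Walk.support]
  | consF h w ih => exact List.mem_cons_of_mem _ ih
  | consB h w ih => exact List.mem_cons_of_mem _ ih
  | consBi h w ih => exact List.mem_cons_of_mem _ ih

lemma notC_of_false_junction {C : Set α} {b v : α} (w : (marginalMAG E).Walk b v)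
    (hj : w.junctionOK C False) (hbv : b ≠ v) : b ∉ C := by
  cases w with
  | nil => exact absurd rfl hbv
  | consF h w' => exact notC_of_noncollider hj (fun hp => hp.1)
  | consB h w' => exact notC_of_noncollider hj (fun hp => hp.1)
  | consBi h w' => exact notC_of_noncollider hj (fun hp => hp.1)

lemma build_dir (hy : ∀ x, ¬ E x (Sum.inr ())) {x c z : α}
    (hxz : x ≠ z) (hd : (marginalMAG E).dir x c)
    (hcz : Relation.ReflTransGen (Fr E) c z)
    (hcY : E (Sum.inr ()) (Sum.inl c)) (hcz' : c ≠ z)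
    (hzY : E (Sum.inr ()) (Sum.inl z)) : (marginalMAG E).dir x z := by
  rcases hd with h | ⟨w0, hw, hch, hanc⟩ | ⟨hch, hanc⟩
  · exact Or.inr (Or.inl ⟨c, h, ⟨hcz', hcY, hzY⟩, (anc_inl hy).mpr hcz⟩)
  · by_cases hwz : w0 = z
    · subst hwz; exact Or.inl hw
    · exact Or.inr (Or.inl ⟨w0, hw, ⟨hwz, hch.2.1, hzY⟩,
        hanc.trans ((anc_inl hy).mpr hcz)⟩)
  · exact Or.inr (Or.inr ⟨⟨hxz, hch.2.1, hzY⟩, hanc.trans ((anc_inl hy).mpr hcz)⟩)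

lemma adj_of_children {u v : α} (huv : u ≠ v)
    (hu : E (Sum.inr ()) (Sum.inl u)) (hv : E (Sum.inr ()) (Sum.inl v)) :
    (marginalMAG E).Adj u v := by
  by_cases h1 : Relation.ReflTransGen E (Sum.inl u) (Sum.inl v)
  · exact Or.inl (Or.inr (Or.inr ⟨⟨huv, hu, hv⟩, h1⟩))
  by_cases h2 : Relation.ReflTransGen E (Sum.inl v) (Sum.inl u)
  · exact Or.inr (Or.inl (Or.inr (Or.inr ⟨⟨huv.symm, hv, hu⟩, h2⟩)))
  · exact Or.inr (Or.inr (Or.inl ⟨⟨huv, hu, hv⟩, h1, h2⟩))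

lemma force (hy : ∀ x, ¬ E x (Sum.inr ())) {u : α} :
    ∀ (b v : α) (w : (marginalMAG E).Walk b v),
      w.DConn (sep E u v) → w.junctionOK (sep E u v) True →
      ¬ Relation.ReflTransGen (Fr E) b u →
      ¬ Relation.ReflTransGen (Fr E) b v → False := by
  intro b v w
  induction w with
  | nil a =>
      intro _ _ _ h2
      exact h2 ReflTransGen.refl
  | consF h w' ih =>
      intro hd hj hbu hbv
      have hba := (dir_anc hy h).to_reflTransGen
      exact ih hd.2 hd.1 (fun hr => hbu (hba.trans hr)) (fun hr => hbv (hba.trans hr))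
  | consB h w' ih =>
      intro hd hj hbu hbv
      rcases collider_anc hy hj ⟨trivial, trivial⟩ with h1 | h1
      exacts [hbu h1, hbv h1]
  | consBi h w' ih =>
      intro hd hj hbu hbv
      rcases collider_anc hy hj ⟨trivial, trivial⟩ with h1 | h1
      exacts [hbu h1, hbv h1]

lemma main (hdag : (MixedGraph.mk E (fun _ _ => False)).Acyclic)
    (hy : ∀ x, ¬ E x (Sum.inr ())) {u : α} :
    ∀ (a v : α) (w : (marginalMAG E).Walk a v), u ≠ v →
      ¬ (marginalMAG E).Adj u v →
      w.DConn (sep E u v) → w.junctionOK (sep E u v) True →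
      u ∉ w.support → w.support.Nodup → a ≠ v →
      ((E (Sum.inr ()) (Sum.inl u) ∧ E (Sum.inr ()) (Sum.inl a)) ∨
       ((∃ c, (marginalMAG E).dir u c ∧ Relation.ReflTransGen (Fr E) c v ∧
          E (Sum.inr ()) (Sum.inl c) ∧ c ≠ v) ∧ E (Sum.inr ()) (Sum.inl a)) ∨
       (marginalMAG E).dir u a) → False := by
  intro a v w
  induction w with
  | nil a =>
      intro _ _ _ _ _ _ hav _
      exact hav rfl
  | @consF a b v h w' ih =>
      intro hne hnadj hd hj hu hnd hav hst
      have hup : u ∉ a :: w'.support := hu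
      have haC : a ∉ sep E u v := notC_of_noncollider hj (fun hp => hp.2)
      have hau : a ≠ u := by
        rintro rfl
        exact hup List.mem_cons_self
      have hab := (dir_anc hy h).to_reflTransGen
      exact force hy b v w' hd.2 hd.1
        (fun hr => haC ⟨hau, hav, Or.inl (hab.trans hr)⟩)
        (fun hr => haC ⟨hau, hav, Or.inr (hab.trans hr)⟩)
  | @consB a b v h w' ih =>
      intro hne hnadj hd hj hu hnd hav hst
      have hup : u ∉ a :: w'.support := hu
      have hau : a ≠ u := by
        rintro rfl
        exact hup List.mem_cons_self
      have hcol := collider_anc hy hj ⟨trivial, trivial⟩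
      by_cases hbv : b = v
      · subst hbv
        -- h : dir v a, terminal case
        have hav2 : ¬ Relation.ReflTransGen (Fr E) a b :=
          fun hr => no_cycle hdag ((dir_anc hy h).trans_left hr)
        have hau2 := hcol.resolve_right hav2
        rcases hst with ⟨hyu, hya⟩ | ⟨⟨c, hduc, hcv, _, _⟩, _⟩ | hdua
        · exact hnadj (Or.inr (Or.inl (build_dir hy hne.symm h hau2 hya hau hyu)))
        · exact no_cycle hdag
            (((dir_anc hy hduc).trans_left hcv).trans
              ((dir_anc hy h).trans_left hau2))
        · exact no_cycle hdag ((dir_anc hy hdua).trans_left hau2)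
      · -- non-terminal: b is internal with a tail at b: contradiction
        have hbC : b ∉ sep E u v := notC_of_false_junction w' hd.1 hbv
        have hbu : b ≠ u := by
          rintro rfl
          exact hup (List.mem_cons_of_mem _ (start_mem_support w'))
        have hba := (dir_anc hy h).to_reflTransGen
        exact hbC ⟨hbu, hbv, hcol.imp hba.trans hba.trans⟩
  | @consBi a b v h w' ih =>
      intro hne hnadj hd hj hu hnd hav hst
      have hup : u ∉ a :: w'.support := hu
      have hndp : (a :: w'.support).Nodup := hnd
      obtain ⟨hab, hya, hyb, hnab, hnba⟩ := bid_info h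
      have hau : a ≠ u := by
        rintro rfl
        exact hup List.mem_cons_self
      have hcol := collider_anc hy hj ⟨trivial, trivial⟩
      by_cases hbv : b = v
      · subst hbv
        -- terminal: Bid a v
        have hav2 : ¬ Relation.ReflTransGen (Fr E) a b :=
          fun hr => hnab ((anc_inl hy).mpr hr)
        rcases hst with ⟨hyu, _⟩ | ⟨⟨c, hduc, hcv, hcY, hcv'⟩, _⟩ | hdua
        · exact hnadj (adj_of_children hne hyu hyb)
        · exact hnadj (Or.inl (build_dir hy hne hduc hcv hcY hcv' hyb))
        · exact no_cycle hdag
            ((dir_anc hy hdua).trans_left (hcol.resolve_right hav2))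
      · -- recurse
        have hu' : u ∉ w'.support := fun hh => hup (List.mem_cons_of_mem _ hh)
        have hnd' : w'.support.Nodup := (List.nodup_cons.mp hndp).2
        refine ih hne hnadj hd.2 hd.1 hu' hnd' hbv ?_
        rcases hst with ⟨hyu, _⟩ | ⟨hc, _⟩ | hdua
        · exact Or.inl ⟨hyu, hyb⟩
        · exact Or.inr (Or.inl ⟨hc, hyb⟩)
        · have hav2 : Relation.ReflTransGen (Fr E) a v :=
            hcol.resolve_left
              (fun hr => no_cycle hdag ((dir_anc hy hdua).trans_left hr))
          exact Or.inr (Or.inl ⟨⟨a, hdua, hav2, hya, hav⟩, hyb⟩)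

end MargAux

/-- Proposition 1: the marginal ancestral graph of a DAG
`D = (V ∪ {y}, E)` with respect to a vertex `y` of in-degree 0 is a MAG. -/
theorem marginalMAG_isMAG {α : Type u}
    (E : (α ⊕ Unit) → (α ⊕ Unit) → Prop)
    (hdag : (MixedGraph.mk E (fun _ _ => False)).Acyclic)
    (hy : ∀ x, ¬ E x (Sum.inr ())) :
    (marginalMAG E).IsMAG := by
  constructor
  · constructor
    · intro a b hd hanc
      exact no_cycle hdag ((dir_anc hy hd).trans_left (ancM_anc hy hanc))
    · intro a b hbid hanc
      obtain ⟨_, _, _, hnab, _⟩ := bid_info hbid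
      exact hnab ((anc_inl hy).mpr (ancM_anc hy hanc))
  · intro u v hne hnadj
    refine ⟨sep E u v, fun h => h.1 rfl, fun h => h.2.1 rfl, ?_⟩
    intro a ha b hb w hp hd
    simp only [Set.mem_singleton_iff] at ha hb
    subst ha; subst hb
    cases w with
    | nil => exact hne rfl
    | @consF _ c1 _ h w' =>
        have hnd : (a :: w'.support).Nodup := hp
        by_cases hc1v : c1 = b
        · subst hc1v
          exact hnadj (Or.inl h)
        · exact main hdag hy c1 b w' hne hnadj hd.2 hd.1 (List.nodup_cons.mp hnd).1
            (List.nodup_cons.mp hnd).2 hc1v (Or.inr (Or.inr h))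
    | @consB _ c1 _ h w' =>
        have hnd : (a :: w'.support).Nodup := hp
        by_cases hc1v : c1 = b
        · subst hc1v
          exact hnadj (Or.inr (Or.inl h))
        · have hc1u : c1 ≠ a := by
            rintro rfl
            exact (List.nodup_cons.mp hnd).1 (start_mem_support w')
          exact notC_of_false_junction w' hd.1 hc1v
            ⟨hc1u, hc1v, Or.inl (dir_anc hy h).to_reflTransGen⟩
    | @consBi _ c1 _ h w' =>
        have hnd : (a :: w'.support).Nodup := hp
        obtain ⟨hac1, hya, hyc1, _, _⟩ := bid_info h
        by_cases hc1v : c1 = b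
        · subst hc1v
          exact hnadj (Or.inr (Or.inr h))
        · exact main hdag hy c1 b w' hne hnadj hd.2 hd.1 (List.nodup_cons.mp hnd).1
            (List.nodup_cons.mp hnd).2 hc1v (Or.inl ⟨hya, hyc1⟩)
end

section
/- If a^(i) ↔ b^(k) is a bidirected edge of M_μ for some i, k ∈ {1, …, K}, then a^(i) ↔ b^(j) is a bidirected edge of M_μ for every j ∈ {1, …, K} \ {i}. -/
set_option maxHeartbeats 1000000

attribute [local instance] Classical.propDecidable

universe u

open MixedGraph

lemma mixture_anc_component {V : Type u} {K : ℕ} {E : Fin K → V → V → Prop} {W : Set V}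
    {i : Fin K} {a : V} {x : (Fin K × V) ⊕ Unit}
    (h : AncE (mixtureDAG K E W).dir (Sum.inl (i, a)) x) :
    ∃ v, x = Sum.inl (i, v) := by
  induction h with
  | refl => exact ⟨a, rfl⟩
  | tail _ e ih =>
    obtain ⟨v, rfl⟩ := ih
    rcases e with ⟨j, u, v', _, h1, h2⟩ | ⟨j, v', _, h1, _⟩
    · obtain ⟨rfl, rfl⟩ : j = i ∧ u = v := by
        have := h1.symm
        simp only [Sum.inl.injEq, Prod.mk.injEq] at this
        exact ⟨this.1, this.2⟩
      exact ⟨v', h2⟩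
    · exact absurd h1 (by simp)

/-- Bidirected Connections, Lemma 3: if `a⁽ⁱ⁾ ↔ b⁽ᵏ⁾` in `M_μ`,
then `a⁽ⁱ⁾ ↔ b⁽ʲ⁾` in `M_μ` for every `j ≠ i`. -/
theorem bidirected_connections
    {V : Type u} {K : ℕ} (E : Fin K → V → V → Prop)
    (hdag : ∀ j, (MixedGraph.mk (E j) (fun _ _ => False)).Acyclic)
    (W : Set V) (hW : ∀ v, ParentsVary E v → v ∈ W)
    {i k : Fin K} {a b : V}
    (h : (mixtureMAG K E W).bidir (i, a) (k, b))
    (j : Fin K) (hj : j ≠ i) :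
    (mixtureMAG K E W).bidir (i, a) (j, b) := by
  obtain ⟨⟨hne, hya, hyb⟩, _, _⟩ := h
  have haW : a ∈ W := by
    rcases hya with ⟨_, _, _, _, h1, _⟩ | ⟨j', v', hv, _, h2⟩
    · simp at h1
    · obtain ⟨rfl, rfl⟩ : j' = i ∧ v' = a := by
        have := h2.symm; simp only [Sum.inl.injEq, Prod.mk.injEq] at this
        exact ⟨this.1, this.2⟩
      exact hv
  have hbW : b ∈ W := by
    rcases hyb with ⟨_, _, _, _, h1, _⟩ | ⟨j', v', hv, _, h2⟩
    · simp at h1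
    · obtain ⟨rfl, rfl⟩ : j' = k ∧ v' = b := by
        have := h2.symm; simp only [Sum.inl.injEq, Prod.mk.injEq] at this
        exact ⟨this.1, this.2⟩
      exact hv
  refine ⟨⟨?_, Or.inr ⟨i, a, haW, rfl, rfl⟩, Or.inr ⟨j, b, hbW, rfl, rfl⟩⟩, ?_, ?_⟩
  · intro hcon
    exact hj ((Prod.ext_iff.mp hcon).1).symm
  · intro hanc
    obtain ⟨v, hv⟩ := mixture_anc_component hanc
    have : j = i ∧ b = v := by
      have := hv; simp only [Sum.inl.injEq, Prod.mk.injEq] at this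
      exact ⟨this.1, this.2⟩
    exact hj this.1
  · intro hanc
    obtain ⟨v, hv⟩ := mixture_anc_component hanc
    have : i = j ∧ a = v := by
      have := hv; simp only [Sum.inl.injEq, Prod.mk.injEq] at this
      exact ⟨this.1, this.2⟩
    exact hj this.1.symm
end

section
/- Suppose M_μ contains bidirected edges a^(i) ↔ b^(j) and c^(k) ↔ d^(l), with a^(i) ≠ d^(l). If i ≠ l, then a^(i) ↔ d^(l) in M_μ. If i = l, then: a^(i) ↔ d^(l) in M_μ if neither of a^(i), d^(l) is an ancestor of the other in M_μ; a^(i) → d^(l) in M_μ if a^(i) ∈ an_{M_μ}(d^(l)); and a^(i) ← d^(l) in M_μ if d^(l) ∈ an_{M_μ}(a^(i)). -/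
set_option maxHeartbeats 1000000

attribute [local instance] Classical.propDecidable

universe u

open MixedGraph

section BidAux

variable {V : Type u} {K : ℕ} {E : Fin K → V → V → Prop} {W : Set V}

/-- A directed path in the mixture DAG between copies stays in one component. -/
lemma mixAnc_fst {u v : Fin K × V}
    (h : AncE (mixtureDAG K E W).dir (Sum.inl u) (Sum.inl v)) : u.1 = v.1 := by
  suffices H : ∀ x, AncE (mixtureDAG K E W).dir x (Sum.inl v) →
      ∀ u : Fin K × V, x = Sum.inl u → u.1 = v.1 from H _ h u rfl
  intro x hx
  induction hx using Relation.ReflTransGen.head_induction_on with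
  | refl => intro u hu; cases hu; rfl
  | head h' _ ih =>
    intro u hu
    subst hu
    rcases h' with ⟨j, p, q, hE, hx, hz⟩ | ⟨j, w, hw, hx, hz⟩
    · obtain rfl : u = (j, p) := Sum.inl_injective hx
      subst hz
      exact ih (j, q) rfl
    · exact absurd hx (by simp)

/-- Ancestry in the mixture DAG implies ancestry in the mixture MAG. -/
lemma mix_ancE_to_anc {u v : Fin K × V}
    (h : AncE (mixtureDAG K E W).dir (Sum.inl u) (Sum.inl v)) :
    (mixtureMAG K E W).Anc u v := by
  suffices H : ∀ x, AncE (mixtureDAG K E W).dir x (Sum.inl v) →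
      ∀ u : Fin K × V, x = Sum.inl u → (mixtureMAG K E W).Anc u v from H _ h u rfl
  intro x hx
  induction hx using Relation.ReflTransGen.head_induction_on with
  | refl => intro u hu; cases hu; exact Relation.ReflTransGen.refl
  | head h' _ ih =>
    intro u hu
    subst hu
    rcases h' with ⟨j, p, q, hE, hx, hz⟩ | ⟨j, w, hw, hx, hz⟩
    · obtain rfl : u = (j, p) := Sum.inl_injective hx
      subst hz
      refine Relation.ReflTransGen.head ?_ (ih (j, q) rfl)
      exact Or.inl (Or.inl ⟨j, p, q, hE, rfl, rfl⟩)
    · exact absurd hx (by simp)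

/-- Ancestry in the mixture MAG implies ancestry in the mixture DAG. -/
lemma mix_anc_to_ancE {u v : Fin K × V}
    (h : (mixtureMAG K E W).Anc u v) :
    AncE (mixtureDAG K E W).dir (Sum.inl u) (Sum.inl v) := by
  induction h with
  | refl => exact Relation.ReflTransGen.refl
  | tail _ hd ih =>
    refine ih.trans ?_
    rcases hd with hE | ⟨w, htw, _, hanc⟩ | ⟨_, hanc⟩
    · exact Relation.ReflTransGen.single hE
    · exact Relation.ReflTransGen.head htw hanc
    · exact hanc

end BidAux

/-- Bidirected district, Lemma 4: suppose `a⁽ⁱ⁾ ↔ b⁽ʲ⁾` and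
`c⁽ᵏ⁾ ↔ d⁽ˡ⁾` in `M_μ`, with `a⁽ⁱ⁾ ≠ d⁽ˡ⁾`. If `i ≠ l` then `a⁽ⁱ⁾ ↔ d⁽ˡ⁾`; if `i = l`
then `a⁽ⁱ⁾ ↔ d⁽ˡ⁾` when neither is an ancestor of the other in `M_μ`, `a⁽ⁱ⁾ → d⁽ˡ⁾`
when `a⁽ⁱ⁾ ∈ an(d⁽ˡ⁾)`, and `a⁽ⁱ⁾ ← d⁽ˡ⁾` when `d⁽ˡ⁾ ∈ an(a⁽ⁱ⁾)`. -/
theorem bidirected_district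
    {V : Type u} {K : ℕ} (E : Fin K → V → V → Prop)
    (hdag : ∀ j, (MixedGraph.mk (E j) (fun _ _ => False)).Acyclic)
    (W : Set V) (hW : ∀ v, ParentsVary E v → v ∈ W)
    {i j k l : Fin K} {a b c d : V}
    (h1 : (mixtureMAG K E W).bidir (i, a) (j, b))
    (h2 : (mixtureMAG K E W).bidir (k, c) (l, d))
    (hne : ((i, a) : Fin K × V) ≠ (l, d)) :
    (i ≠ l → (mixtureMAG K E W).bidir (i, a) (l, d)) ∧
    (i = l → ¬ (mixtureMAG K E W).Anc (i, a) (l, d) →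
      ¬ (mixtureMAG K E W).Anc (l, d) (i, a) → (mixtureMAG K E W).bidir (i, a) (l, d)) ∧
    (i = l → (mixtureMAG K E W).Anc (i, a) (l, d) → (mixtureMAG K E W).dir (i, a) (l, d)) ∧
    (i = l → (mixtureMAG K E W).Anc (l, d) (i, a) → (mixtureMAG K E W).dir (l, d) (i, a)) := by
  obtain ⟨⟨_, hya, _⟩, _, _⟩ := h1
  obtain ⟨⟨_, _, hyd⟩, _, _⟩ := h2
  refine ⟨?_, ?_, ?_, ?_⟩
  · intro hil
    exact ⟨⟨hne, hya, hyd⟩, fun h => hil (mixAnc_fst h), fun h => hil (mixAnc_fst h).symm⟩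
  · intro _ hnad hnda
    exact ⟨⟨hne, hya, hyd⟩, fun h => hnad (mix_ancE_to_anc h),
      fun h => hnda (mix_ancE_to_anc h)⟩
  · intro _ had
    exact Or.inr (Or.inr ⟨⟨hne, hya, hyd⟩, mix_anc_to_ancE had⟩)
  · intro _ hda
    exact Or.inr (Or.inr ⟨⟨hne.symm, hyd, hya⟩, mix_anc_to_ancE hda⟩)
end

section
/- Assume the component MAGs M^(1), …, M^(K) are compatible with the same poset. If for some j ≠ k the graph M_μ contains an edge between a^(j) and b^(j) with an arrowhead at b^(j) (that is, a^(j) → b^(j) or a^(j) ↔ b^(j)), but M_μ does not contain the edge of the same type between a^(k) and b^(k), then M_μ contains the bidirected edge b^(j) ↔ b^(k). -/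
set_option maxHeartbeats 1000000

attribute [local instance] Classical.propDecidable

universe u

open MixedGraph

lemma mixture_stay {V : Type u} {K : ℕ} (E : Fin K → V → V → Prop) (W : Set V)
    (j : Fin K) (u : V) :
    ∀ x, Relation.ReflTransGen (mixtureDAG K E W).dir (Sum.inl (j, u)) x →
      ∃ v, x = Sum.inl (j, v) := by
  intro x h
  induction h with
  | refl => exact ⟨u, rfl⟩
  | tail h1 h2 ih =>
    obtain ⟨v, rfl⟩ := ih
    rcases h2 with ⟨j', u', v', he, h1', h2'⟩ | ⟨j', v', _, h1', _⟩
    · rw [Sum.inl.injEq, Prod.mk.injEq] at h1'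
      exact ⟨v', by rw [h2', h1'.1]⟩
    · exact absurd h1' (by simp)

lemma mixture_yedge {V : Type u} {K : ℕ} {E : Fin K → V → V → Prop} {W : Set V}
    {j : Fin K} {b : V}
    (h : (mixtureDAG K E W).dir (Sum.inr ()) (Sum.inl (j, b))) : b ∈ W := by
  rcases h with ⟨_, _, _, _, h1, _⟩ | ⟨j', v', hv, _, h2⟩
  · exact absurd h1 (by simp)
  · rw [Sum.inl.injEq, Prod.mk.injEq] at h2
    exact h2.2 ▸ hv

lemma mixture_innerE {V : Type u} {K : ℕ} {E : Fin K → V → V → Prop} {W : Set V}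
    {j : Fin K} {a b : V}
    (h : (mixtureDAG K E W).dir (Sum.inl (j, a)) (Sum.inl (j, b))) : E j a b := by
  rcases h with ⟨j', u', v', he, h1, h2⟩ | ⟨_, _, _, h1, _⟩
  · rw [Sum.inl.injEq, Prod.mk.injEq] at h1 h2
    rw [← h1.1, ← h1.2, ← h2.2] at he; exact he
  · exact absurd h1 (by simp)

/-- Changing Arrowtips, Lemma 6: under poset compatibility, if for
`j ≠ k` the graph `M_μ` contains an edge `a⁽ʲ⁾ → b⁽ʲ⁾` or `a⁽ʲ⁾ ↔ b⁽ʲ⁾` but not the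
edge of the same type between `a⁽ᵏ⁾` and `b⁽ᵏ⁾`, then `b⁽ʲ⁾ ↔ b⁽ᵏ⁾` in `M_μ`. -/
theorem changing_arrowtips
    {V : Type u} {K : ℕ} (E : Fin K → V → V → Prop)
    (hdag : ∀ j, (MixedGraph.mk (E j) (fun _ _ => False)).Acyclic)
    (W : Set V) (hW : ∀ v, ParentsVary E v → v ∈ W)
    (hcomp : PosetCompatible E W)
    {j k : Fin K} (hjk : j ≠ k) {a b : V}
    (h : ((mixtureMAG K E W).dir (j, a) (j, b) ∧ ¬ (mixtureMAG K E W).dir (k, a) (k, b)) ∨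
      ((mixtureMAG K E W).bidir (j, a) (j, b) ∧ ¬ (mixtureMAG K E W).bidir (k, a) (k, b))) :
    (mixtureMAG K E W).bidir (j, b) (k, b) := by
  have hbW : b ∈ W := by
    rcases h with ⟨hd, hnd⟩ | ⟨hb, _⟩
    · rcases hd with hE | ⟨u, _, ⟨_, _, hy⟩, _⟩ | ⟨⟨_, _, hy⟩, _⟩
      · have hjab : E j a b := mixture_innerE hE
        have hnk : ¬ E k a b := by
          intro hk
          exact hnd (Or.inl (Or.inl ⟨k, a, b, hk, rfl, rfl⟩))
        exact hW b (fun hall => hnk ((hall j k a).mp hjab))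
      · exact mixture_yedge hy
      · exact mixture_yedge hy
    · exact mixture_yedge hb.1.2.2
  refine ⟨⟨?_, ?_, ?_⟩, ?_, ?_⟩
  · simp [Prod.ext_iff, hjk]
  · exact Or.inr ⟨j, b, hbW, rfl, rfl⟩
  · exact Or.inr ⟨k, b, hbW, rfl, rfl⟩
  · intro hanc
    obtain ⟨v, hv⟩ := mixture_stay E W j b _ hanc
    rw [Sum.inl.injEq, Prod.mk.injEq] at hv
    exact hjk hv.1.symm
  · intro hanc
    obtain ⟨v, hv⟩ := mixture_stay E W k b _ hanc
    rw [Sum.inl.injEq, Prod.mk.injEq] at hv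
    exact hjk hv.1
end

section
/- Let a, b ∈ V, C ⊆ V \ {a, b}, and i, k ∈ {1, …, K}. If there is a d-connecting path given [C] between a^(i) and b^(k) in M_μ, then there is a d-connecting path given [C] between a^(i) and b^(k) in M_μ that contains at most one bidirected edge. -/
set_option maxHeartbeats 1000000

attribute [local instance] Classical.propDecidable

universe u

open MixedGraph

namespace AMOBE

open MixedGraph MixedGraph.Walk

section WalkLemmas

variable {α : Type u} {G : MixedGraph α}

/-- Concatenation of walks. -/
def wappend : ∀ {a b c : α}, G.Walk a b → G.Walk b c → G.Walk a c
  | _, _, _, .nil _, w2 => w2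
  | _, _, _, .consF h w, w2 => .consF h (wappend w w2)
  | _, _, _, .consB h w, w2 => .consB h (wappend w w2)
  | _, _, _, .consBi h w, w2 => .consBi h (wappend w w2)

/-- A walk is nonempty. -/
def notNil : ∀ {a b : α}, G.Walk a b → Prop
  | _, _, .nil _ => False
  | _, _, .consF _ _ => True
  | _, _, .consB _ _ => True
  | _, _, .consBi _ _ => True

/-- `arrowOut w P` : whether the last edge of `w` has an arrowhead at the final
vertex, defaulting to `P` if `w` is empty. -/
def arrowOut : ∀ {a b : α}, G.Walk a b → Prop → Prop
  | _, _, .nil _, P => P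
  | _, _, .consF _ w, _ => arrowOut w True
  | _, _, .consB _ w, _ => arrowOut w False
  | _, _, .consBi _ w, _ => arrowOut w True

lemma support_ne_nil : ∀ {a b : α} (w : G.Walk a b), w.support ≠ []
  | _, _, .nil _ => by simp [Walk.support]
  | _, _, .consF _ _ => by simp [Walk.support]
  | _, _, .consB _ _ => by simp [Walk.support]
  | _, _, .consBi _ _ => by simp [Walk.support]

lemma support_head : ∀ {a b : α} (w : G.Walk a b), ∃ l, w.support = a :: l
  | _, _, .nil _ => ⟨[], rfl⟩
  | _, _, .consF _ w => ⟨w.support, rfl⟩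
  | _, _, .consB _ w => ⟨w.support, rfl⟩
  | _, _, .consBi _ w => ⟨w.support, rfl⟩

lemma start_mem_support {a b : α} (w : G.Walk a b) : a ∈ w.support := by
  obtain ⟨l, hl⟩ := support_head w; rw [hl]; exact List.mem_cons_self

lemma support_concat : ∀ {a b : α} (w : G.Walk a b), w.support = w.support.dropLast ++ [b]
  | _, _, .nil _ => rfl
  | _, _, .consF (b := b') h w => by
      show _ :: w.support = (_ :: w.support).dropLast ++ _
      rw [List.dropLast_cons_of_ne_nil (support_ne_nil w), List.cons_append]
      exact congrArg _ (support_concat w)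
  | _, _, .consB h w => by
      show _ :: w.support = (_ :: w.support).dropLast ++ _
      rw [List.dropLast_cons_of_ne_nil (support_ne_nil w), List.cons_append]
      exact congrArg _ (support_concat w)
  | _, _, .consBi h w => by
      show _ :: w.support = (_ :: w.support).dropLast ++ _
      rw [List.dropLast_cons_of_ne_nil (support_ne_nil w), List.cons_append]
      exact congrArg _ (support_concat w)

lemma support_wappend : ∀ {a b c : α} (w1 : G.Walk a b) (w2 : G.Walk b c),
    (wappend w1 w2).support = w1.support.dropLast ++ w2.support
  | _, _, _, .nil _, w2 => rfl
  | _, _, _, .consF h w, w2 => by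
      show _ :: (wappend w w2).support = (_ :: w.support).dropLast ++ w2.support
      rw [List.dropLast_cons_of_ne_nil (support_ne_nil w), List.cons_append,
        support_wappend w w2]
  | _, _, _, .consB h w, w2 => by
      show _ :: (wappend w w2).support = (_ :: w.support).dropLast ++ w2.support
      rw [List.dropLast_cons_of_ne_nil (support_ne_nil w), List.cons_append,
        support_wappend w w2]
  | _, _, _, .consBi h w, w2 => by
      show _ :: (wappend w w2).support = (_ :: w.support).dropLast ++ w2.support
      rw [List.dropLast_cons_of_ne_nil (support_ne_nil w), List.cons_append,
        support_wappend w w2]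

lemma bidirCount_wappend : ∀ {a b c : α} (w1 : G.Walk a b) (w2 : G.Walk b c),
    (wappend w1 w2).bidirCount = w1.bidirCount + w2.bidirCount
  | _, _, _, .nil _, w2 => (Nat.zero_add _).symm
  | _, _, _, .consF h w, w2 => by
      show (wappend w w2).bidirCount = w.bidirCount + w2.bidirCount
      exact bidirCount_wappend w w2
  | _, _, _, .consB h w, w2 => by
      show (wappend w w2).bidirCount = w.bidirCount + w2.bidirCount
      exact bidirCount_wappend w w2
  | _, _, _, .consBi h w, w2 => by
      show (wappend w w2).bidirCount + 1 = (w.bidirCount + 1) + w2.bidirCount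
      rw [bidirCount_wappend w w2]; omega

end WalkLemmas

end AMOBE
namespace AMOBE

open MixedGraph MixedGraph.Walk

section DConnLemmas

variable {α : Type u} {G : MixedGraph α} {C : Set α}

lemma active_elim {a : α} {Z : Prop} (h : G.activeVertex C a Z) (hz : ¬ Z) : a ∉ C := by
  rcases h with ⟨h1, _⟩ | ⟨_, h2⟩
  · exact absurd h1 hz
  · exact h2

lemma active_intro {a : α} {Z : Prop} (hz : ¬ Z) (h : a ∉ C) : G.activeVertex C a Z :=
  Or.inr ⟨hz, h⟩

lemma active_congr {a : α} {Z Z' : Prop} (hzz : Z ↔ Z') (h : G.activeVertex C a Z) :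
    G.activeVertex C a Z' := by
  rcases h with ⟨h1, h2⟩ | ⟨h1, h2⟩
  · exact Or.inl ⟨hzz.mp h1, h2⟩
  · exact Or.inr ⟨fun hz => h1 (hzz.mpr hz), h2⟩

lemma arrowOut_eq_of_notNil : ∀ {a b : α} (w : G.Walk a b), notNil w →
    ∀ (P Q : Prop), arrowOut w P = arrowOut w Q
  | _, _, .nil _, hn => absurd hn not_false
  | _, _, .consF _ w, _ => fun _ _ => rfl
  | _, _, .consB _ w, _ => fun _ _ => rfl
  | _, _, .consBi _ w, _ => fun _ _ => rfl

/-- Intro rule for d-connectedness of an appended walk. -/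
lemma dconn_wappend : ∀ {a b c : α} (w1 : G.Walk a b) (w2 : G.Walk b c),
    w1.DConn C → w2.DConn C → (notNil w1 → ∀ P, w2.junctionOK C (arrowOut w1 P)) →
    (wappend w1 w2).DConn C
  | _, _, _, .nil _, w2, _, h2, _ => h2
  | _, _, _, .consF h (.nil _), w2, h1, h2, hmid => ⟨hmid trivial True, h2⟩
  | _, _, _, .consF h (.consF h' w'), w2, h1, h2, hmid =>
      ⟨h1.1, dconn_wappend _ w2 h1.2 h2 (fun _ P => hmid trivial P)⟩
  | _, _, _, .consF h (.consB h' w'), w2, h1, h2, hmid =>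
      ⟨h1.1, dconn_wappend _ w2 h1.2 h2 (fun _ P => hmid trivial P)⟩
  | _, _, _, .consF h (.consBi h' w'), w2, h1, h2, hmid =>
      ⟨h1.1, dconn_wappend _ w2 h1.2 h2 (fun _ P => hmid trivial P)⟩
  | _, _, _, .consB h (.nil _), w2, h1, h2, hmid => ⟨hmid trivial True, h2⟩
  | _, _, _, .consB h (.consF h' w'), w2, h1, h2, hmid =>
      ⟨h1.1, dconn_wappend _ w2 h1.2 h2 (fun _ P => hmid trivial P)⟩
  | _, _, _, .consB h (.consB h' w'), w2, h1, h2, hmid =>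
      ⟨h1.1, dconn_wappend _ w2 h1.2 h2 (fun _ P => hmid trivial P)⟩
  | _, _, _, .consB h (.consBi h' w'), w2, h1, h2, hmid =>
      ⟨h1.1, dconn_wappend _ w2 h1.2 h2 (fun _ P => hmid trivial P)⟩
  | _, _, _, .consBi h (.nil _), w2, h1, h2, hmid => ⟨hmid trivial True, h2⟩
  | _, _, _, .consBi h (.consF h' w'), w2, h1, h2, hmid =>
      ⟨h1.1, dconn_wappend _ w2 h1.2 h2 (fun _ P => hmid trivial P)⟩
  | _, _, _, .consBi h (.consB h' w'), w2, h1, h2, hmid =>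
      ⟨h1.1, dconn_wappend _ w2 h1.2 h2 (fun _ P => hmid trivial P)⟩
  | _, _, _, .consBi h (.consBi h' w'), w2, h1, h2, hmid =>
      ⟨h1.1, dconn_wappend _ w2 h1.2 h2 (fun _ P => hmid trivial P)⟩

/-- Elimination rule for d-connectedness of an appended walk. -/
lemma dconn_wappend_elim : ∀ {a b c : α} (w1 : G.Walk a b) (w2 : G.Walk b c),
    (wappend w1 w2).DConn C →
    w1.DConn C ∧ w2.DConn C ∧ (notNil w1 → ∀ P, w2.junctionOK C (arrowOut w1 P))
  | _, _, _, .nil _, w2, h => ⟨trivial, h, fun hn => absurd hn not_false⟩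
  | _, _, _, .consF h (.nil _), w2, hc => ⟨⟨trivial, trivial⟩, hc.2, fun _ _ => hc.1⟩
  | _, _, _, .consF h (.consF h' w'), w2, hc => by
      obtain ⟨d1, d2, mid⟩ := dconn_wappend_elim _ w2 hc.2
      exact ⟨⟨hc.1, d1⟩, d2, fun _ P => mid trivial P⟩
  | _, _, _, .consF h (.consB h' w'), w2, hc => by
      obtain ⟨d1, d2, mid⟩ := dconn_wappend_elim _ w2 hc.2
      exact ⟨⟨hc.1, d1⟩, d2, fun _ P => mid trivial P⟩
  | _, _, _, .consF h (.consBi h' w'), w2, hc => by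
      obtain ⟨d1, d2, mid⟩ := dconn_wappend_elim _ w2 hc.2
      exact ⟨⟨hc.1, d1⟩, d2, fun _ P => mid trivial P⟩
  | _, _, _, .consB h (.nil _), w2, hc => ⟨⟨trivial, trivial⟩, hc.2, fun _ _ => hc.1⟩
  | _, _, _, .consB h (.consF h' w'), w2, hc => by
      obtain ⟨d1, d2, mid⟩ := dconn_wappend_elim _ w2 hc.2
      exact ⟨⟨hc.1, d1⟩, d2, fun _ P => mid trivial P⟩
  | _, _, _, .consB h (.consB h' w'), w2, hc => by
      obtain ⟨d1, d2, mid⟩ := dconn_wappend_elim _ w2 hc.2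
      exact ⟨⟨hc.1, d1⟩, d2, fun _ P => mid trivial P⟩
  | _, _, _, .consB h (.consBi h' w'), w2, hc => by
      obtain ⟨d1, d2, mid⟩ := dconn_wappend_elim _ w2 hc.2
      exact ⟨⟨hc.1, d1⟩, d2, fun _ P => mid trivial P⟩
  | _, _, _, .consBi h (.nil _), w2, hc => ⟨⟨trivial, trivial⟩, hc.2, fun _ _ => hc.1⟩
  | _, _, _, .consBi h (.consF h' w'), w2, hc => by
      obtain ⟨d1, d2, mid⟩ := dconn_wappend_elim _ w2 hc.2
      exact ⟨⟨hc.1, d1⟩, d2, fun _ P => mid trivial P⟩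
  | _, _, _, .consBi h (.consB h' w'), w2, hc => by
      obtain ⟨d1, d2, mid⟩ := dconn_wappend_elim _ w2 hc.2
      exact ⟨⟨hc.1, d1⟩, d2, fun _ P => mid trivial P⟩
  | _, _, _, .consBi h (.consBi h' w'), w2, hc => by
      obtain ⟨d1, d2, mid⟩ := dconn_wappend_elim _ w2 hc.2
      exact ⟨⟨hc.1, d1⟩, d2, fun _ P => mid trivial P⟩

end DConnLemmas

end AMOBE
namespace AMOBE

open MixedGraph MixedGraph.Walk

set_option linter.unusedVariables false

section SplitLemmas

variable {α : Type u} {G : MixedGraph α}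

lemma splitFirst : ∀ {p q : α} (w : G.Walk p q), w.bidirCount ≠ 0 →
    ∃ (u m : α) (P : G.Walk p u) (h : G.Bid u m) (R : G.Walk m q),
      w = wappend P (.consBi h R) ∧ P.bidirCount = 0
  | _, _, .nil _, h0 => absurd rfl h0
  | _, _, .consF h w, h0 => by
      obtain ⟨u, m, P, hb, R, heq, hP⟩ := splitFirst w h0
      exact ⟨u, m, .consF h P, hb, R, by rw [show wappend (Walk.consF h P) (.consBi hb R) =
        Walk.consF h (wappend P (.consBi hb R)) from rfl, ← heq], hP⟩
  | _, _, .consB h w, h0 => by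
      obtain ⟨u, m, P, hb, R, heq, hP⟩ := splitFirst w h0
      exact ⟨u, m, .consB h P, hb, R, by rw [show wappend (Walk.consB h P) (.consBi hb R) =
        Walk.consB h (wappend P (.consBi hb R)) from rfl, ← heq], hP⟩
  | p, _, .consBi h w, h0 => ⟨_, _, .nil p, h, w, rfl, rfl⟩

lemma splitLast : ∀ {p q : α} (w : G.Walk p q), w.bidirCount ≠ 0 →
    ∃ (n v : α) (M : G.Walk p n) (h : G.Bid n v) (S : G.Walk v q),
      w = wappend M (.consBi h S) ∧ S.bidirCount = 0
  | _, _, .nil _, h0 => absurd rfl h0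
  | _, _, .consF h w, h0 => by
      obtain ⟨n, v, M, hb, S, heq, hS⟩ := splitLast w h0
      exact ⟨n, v, .consF h M, hb, S, by rw [show wappend (Walk.consF h M) (.consBi hb S) =
        Walk.consF h (wappend M (.consBi hb S)) from rfl, ← heq], hS⟩
  | _, _, .consB h w, h0 => by
      obtain ⟨n, v, M, hb, S, heq, hS⟩ := splitLast w h0
      exact ⟨n, v, .consB h M, hb, S, by rw [show wappend (Walk.consB h M) (.consBi hb S) =
        Walk.consB h (wappend M (.consBi hb S)) from rfl, ← heq], hS⟩
  | p, _, .consBi h w, h0 => by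
      by_cases hw : w.bidirCount = 0
      · exact ⟨_, _, .nil p, h, w, rfl, hw⟩
      · obtain ⟨n, v, M, hb, S, heq, hS⟩ := splitLast w hw
        exact ⟨n, v, .consBi h M, hb, S, by rw [show wappend (Walk.consBi h M) (.consBi hb S) =
          Walk.consBi h (wappend M (.consBi hb S)) from rfl, ← heq], hS⟩

end SplitLemmas

end AMOBE
namespace AMOBE

open MixedGraph MixedGraph.Walk

set_option linter.unusedVariables false

section Surgery

variable {α : Type u} {G : MixedGraph α} {C : Set α}

lemma end_mem_support {a b : α} (w : G.Walk a b) : b ∈ w.support := by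
  rw [support_concat w]; simp

lemma junctionOK_iff_active : ∀ {a b : α} (w : G.Walk a b), notNil w → ∀ X : Prop,
    (w.junctionOK C X ↔ G.activeVertex C a (X ∧ w.arrowAtStart))
  | _, _, .nil _, hn => absurd hn not_false
  | _, _, .consF _ _, _ => fun _ => Iff.rfl
  | _, _, .consB _ _, _ => fun _ => Iff.rfl
  | _, _, .consBi _ _, _ => fun _ => Iff.rfl

lemma junction_transfer {b u q : α} {w'' : G.Walk b q} {P' : G.Walk b u}
    (hnn : notNil w'') (hnP : notNil P') (hAS : w''.arrowAtStart ↔ P'.arrowAtStart)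
    (X : Prop) (hj : P'.junctionOK C X) : w''.junctionOK C X :=
  (junctionOK_iff_active w'' hnn X).mpr
    (active_congr (and_congr_right fun _ => hAS.symm)
      ((junctionOK_iff_active P' hnP X).mp hj))

lemma buildB {Hub : Set α}
    (hcomp : ∀ x u v, u ∈ Hub → v ∈ Hub → u ≠ v → G.dir x u → G.dir u v → x ≠ v → G.dir x v)
    {v q : α} (hvH : v ∈ Hub)
    (S : G.Walk v q) (hSJ : S.junctionOK C True) (hSD : S.DConn C) :
    ∀ {p u : α} (P : G.Walk p u), u ∈ Hub → u ≠ v → G.dir u v →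
      P.bidirCount = 0 → P.DConn C →
      (notNil P → ∀ X : Prop, G.activeVertex C u (arrowOut P X ∧ True)) →
      (P.support ++ S.support).Nodup →
      ∃ w' : G.Walk p q, w'.support.Sublist (P.support ++ S.support) ∧
        w'.bidirCount = S.bidirCount ∧ w'.DConn C ∧ notNil w' ∧
        (w'.arrowAtStart ↔ P.arrowAtStart) := by
  intro p u P
  induction P with
  | nil a =>
      intro huH huv hdir _ _ _ _
      exact ⟨.consF hdir S, List.Sublist.refl _, rfl, ⟨hSJ, hSD⟩, trivial, Iff.rfl⟩
  | @consF p x u h P' ih =>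
      intro huH huv hdir hP0 hPD hPJ hnd
      cases P' with
      | nil =>
          by_cases hu : x ∈ C
          · -- bad case: skip over the collider using the composition edge
            have hpv : p ≠ v := by
              intro he; subst he
              exact (List.disjoint_of_nodup_append hnd) List.mem_cons_self
                (start_mem_support S)
            exact ⟨.consF (hcomp p _ v huH hvH huv h hdir hpv) S,
              List.Sublist.cons₂ p (List.Sublist.cons _ (List.Sublist.refl _)),
              rfl, ⟨hSJ, hSD⟩, trivial, Iff.rfl⟩
          · exact ⟨.consF h (.consF hdir S), List.Sublist.refl _, rfl,
              ⟨active_intro (by simp) hu, hSJ, hSD⟩, trivial, Iff.rfl⟩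
      | @consF x y u h' P'' =>
          obtain ⟨w'', hsub, hcnt, hdc, hnn, hAS⟩ :=
            ih huH huv hdir hP0 hPD.2 (fun _ X => hPJ trivial X) (hnd.of_cons)
          exact ⟨.consF h w'', List.Sublist.cons₂ p hsub, hcnt,
            ⟨junction_transfer (P' := Walk.consF h' P'') hnn trivial hAS True hPD.1, hdc⟩,
            trivial, Iff.rfl⟩
      | @consB x y u h' P'' =>
          obtain ⟨w'', hsub, hcnt, hdc, hnn, hAS⟩ :=
            ih huH huv hdir hP0 hPD.2 (fun _ X => hPJ trivial X) (hnd.of_cons)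
          exact ⟨.consF h w'', List.Sublist.cons₂ p hsub, hcnt,
            ⟨junction_transfer (P' := Walk.consB h' P'') hnn trivial hAS True hPD.1, hdc⟩,
            trivial, Iff.rfl⟩
      | consBi h' P'' => exact absurd hP0 (Nat.succ_ne_zero _)
  | @consB p x u h P' ih =>
      intro huH huv hdir hP0 hPD hPJ hnd
      cases P' with
      | nil =>
          have hu : x ∉ C :=
            active_elim (hPJ trivial True) (fun hf => hf.1)
          exact ⟨.consB h (.consF hdir S), List.Sublist.refl _, rfl,
            ⟨active_intro (by simp) hu, hSJ, hSD⟩, trivial, Iff.rfl⟩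
      | @consF x y u h' P'' =>
          obtain ⟨w'', hsub, hcnt, hdc, hnn, hAS⟩ :=
            ih huH huv hdir hP0 hPD.2 (fun _ X => hPJ trivial X) (hnd.of_cons)
          exact ⟨.consB h w'', List.Sublist.cons₂ p hsub, hcnt,
            ⟨junction_transfer (P' := Walk.consF h' P'') hnn trivial hAS False hPD.1, hdc⟩,
            trivial, Iff.rfl⟩
      | @consB x y u h' P'' =>
          obtain ⟨w'', hsub, hcnt, hdc, hnn, hAS⟩ :=
            ih huH huv hdir hP0 hPD.2 (fun _ X => hPJ trivial X) (hnd.of_cons)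
          exact ⟨.consB h w'', List.Sublist.cons₂ p hsub, hcnt,
            ⟨junction_transfer (P' := Walk.consB h' P'') hnn trivial hAS False hPD.1, hdc⟩,
            trivial, Iff.rfl⟩
      | consBi h' P'' => exact absurd hP0 (Nat.succ_ne_zero _)
  | consBi h P' ih =>
      intro _ _ _ hP0 _ _ _
      exact absurd hP0 (Nat.succ_ne_zero _)

end Surgery

end AMOBE
namespace AMOBE

open MixedGraph MixedGraph.Walk

set_option linter.unusedVariables false

section Abstract

variable {α : Type u} {G : MixedGraph α} {C : Set α}

lemma abstract_surgery (Hub : Set α)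
    (hHub : ∀ u v, G.Bid u v → u ∈ Hub ∧ v ∈ Hub)
    (htri : ∀ u v, u ∈ Hub → v ∈ Hub → u ≠ v → G.Bid u v ∨ G.dir u v ∨ G.dir v u)
    (hcomp : ∀ x u v, u ∈ Hub → v ∈ Hub → u ≠ v → G.dir x u → G.dir u v → x ≠ v → G.dir x v)
    {p q : α} (w : G.Walk p q) (hpath : w.IsPath) (hconn : w.DConn C) :
    ∃ w' : G.Walk p q, w'.IsPath ∧ w'.DConn C ∧ w'.bidirCount ≤ 1 := by
  by_cases hc : w.bidirCount ≤ 1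
  · exact ⟨w, hpath, hconn, hc⟩
  obtain ⟨u, m, P, hb1, R, heq1, hP0⟩ := splitFirst w (by omega)
  have hRcnt : R.bidirCount ≠ 0 := by
    have h1 := bidirCount_wappend P (Walk.consBi hb1 R)
    rw [← heq1] at h1
    have h2 : (Walk.consBi hb1 R).bidirCount = R.bidirCount + 1 := rfl
    omega
  obtain ⟨n, v, Mid, hb2, S, heq2, hS0⟩ := splitLast R hRcnt
  subst heq2
  subst heq1
  obtain ⟨hPD, hW2D, midP⟩ := dconn_wappend_elim P _ hconn
  have hRD : (wappend Mid (Walk.consBi hb2 S)).DConn C := hW2D.2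
  obtain ⟨-, hW3D, -⟩ := dconn_wappend_elim Mid _ hRD
  have hSJ : S.junctionOK C True := hW3D.1
  have hSD : S.DConn C := hW3D.2
  have hPJ : notNil P → ∀ X : Prop, G.activeVertex C u (arrowOut P X ∧ True) :=
    fun hn X => midP hn X
  have hsupp : (wappend P (Walk.consBi hb1 (wappend Mid (Walk.consBi hb2 S)))).support
      = P.support.dropLast ++ (u :: (Mid.support.dropLast ++ (n :: S.support))) := by
    rw [support_wappend]
    congr 1
    show u :: (wappend Mid (Walk.consBi hb2 S)).support = _
    rw [support_wappend]
    rfl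
  have hnd0 : (P.support.dropLast ++ (u :: (Mid.support.dropLast ++ (n :: S.support)))).Nodup := by
    rw [← hsupp]; exact hpath
  have hsubS : S.support.Sublist (Mid.support.dropLast ++ (n :: S.support)) :=
    List.Sublist.trans (List.Sublist.cons n (List.Sublist.refl _))
      (List.sublist_append_right _ _)
  have hndPS : (P.support ++ S.support).Nodup := by
    refine hnd0.sublist ?_
    conv_lhs => rw [support_concat P]
    rw [List.append_assoc]
    exact List.Sublist.append_left (List.Sublist.cons₂ u hsubS) _
  have huH : u ∈ Hub := (hHub u m hb1).1
  have hvH : v ∈ Hub := (hHub n v hb2).2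
  have huv : u ≠ v := by
    intro he
    exact (List.disjoint_of_nodup_append hndPS) (end_mem_support P)
      (he ▸ start_mem_support S)
  rcases htri u v huH hvH huv with hb | hd | hd
  · -- replace the middle by a single bidirected edge
    refine ⟨wappend P (.consBi hb S), ?_, ?_, ?_⟩
    · show (wappend P (Walk.consBi hb S)).support.Nodup
      rw [support_wappend]
      exact hnd0.sublist (List.Sublist.append_left (List.Sublist.cons₂ u hsubS) _)
    · exact dconn_wappend P _ hPD ⟨hSJ, hSD⟩ (fun hn X => hPJ hn X)
    · rw [bidirCount_wappend]
      have h2 : (Walk.consBi hb S).bidirCount = S.bidirCount + 1 := rfl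
      omega
  · -- u → v : rebuild the left part
    obtain ⟨w', hsub, hcnt, hdc, -, -⟩ :=
      buildB hcomp hvH S hSJ hSD P huH huv hd hP0 hPD hPJ hndPS
    exact ⟨w', hndPS.sublist hsub, hdc, by omega⟩
  · -- v → u : surgery on the right part
    cases S with
    | nil =>
        refine ⟨wappend P (.consB hd (.nil _)), ?_, ?_, ?_⟩
        · show (wappend P _).support.Nodup
          rw [support_wappend]
          exact hnd0.sublist (List.Sublist.append_left (List.Sublist.cons₂ u hsubS) _)
        · exact dconn_wappend P _ hPD ⟨trivial, trivial⟩ (fun hn X => hPJ hn X)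
        · rw [bidirCount_wappend]
          have h2 : (Walk.consB hd (Walk.nil _)).bidirCount = 0 := rfl
          omega
    | @consF v s q h' S'' =>
        have hv : v ∉ C := active_elim hSJ (fun hf => hf.2)
        refine ⟨wappend P (.consB hd (.consF h' S'')), ?_, ?_, ?_⟩
        · show (wappend P _).support.Nodup
          rw [support_wappend]
          exact hnd0.sublist (List.Sublist.append_left (List.Sublist.cons₂ u hsubS) _)
        · exact dconn_wappend P _ hPD ⟨active_intro (fun hf => hf.1) hv, hSD⟩
            (fun hn X => hPJ hn X)
        · rw [bidirCount_wappend]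
          have h2 : (Walk.consB hd (Walk.consF h' S'')).bidirCount = 0 := hS0
          omega
    | @consB v s q h' S'' =>
        by_cases hv : v ∈ C
        · -- bad case: skip over v using the composition edge
          have hsu : s ≠ u := by
            intro he
            exact (List.disjoint_of_nodup_append hndPS) (end_mem_support P)
              (he ▸ List.mem_cons_of_mem v (start_mem_support S''))
          have hnew : G.dir s u :=
            hcomp s v u hvH huH (fun he => huv he.symm) h' hd hsu
          refine ⟨wappend P (.consB hnew S''), ?_, ?_, ?_⟩
          · show (wappend P _).support.Nodup
            rw [support_wappend]
            refine hnd0.sublist (List.Sublist.append_left (List.Sublist.cons₂ u ?_) _)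
            exact List.Sublist.trans
              (List.Sublist.cons v (List.Sublist.refl S''.support)) hsubS
          · exact dconn_wappend P _ hPD hSD (fun hn X => hPJ hn X)
          · rw [bidirCount_wappend]
            have h2 : (Walk.consB hnew S'').bidirCount = 0 := hS0
            omega
        · refine ⟨wappend P (.consB hd (.consB h' S'')), ?_, ?_, ?_⟩
          · show (wappend P _).support.Nodup
            rw [support_wappend]
            exact hnd0.sublist (List.Sublist.append_left (List.Sublist.cons₂ u hsubS) _)
          · exact dconn_wappend P _ hPD ⟨active_intro (fun hf => hf.1) hv, hSD⟩
              (fun hn X => hPJ hn X)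
          · rw [bidirCount_wappend]
            have h2 : (Walk.consB hd (Walk.consB h' S'')).bidirCount = 0 := hS0
            omega
    | consBi h' S'' => exact absurd hS0 (Nat.succ_ne_zero _)

end Abstract

end AMOBE
namespace AMOBE

open MixedGraph

section Mixture

variable {V : Type u} {K : ℕ} {E : Fin K → V → V → Prop} {W : Set V}

lemma dirY_iff {p : Fin K × V} :
    (mixtureDAG K E W).dir (Sum.inr ()) (Sum.inl p) ↔ p.2 ∈ W := by
  constructor
  · rintro (⟨j, u', v', he, hx, hz⟩ | ⟨j, v', hv, hx, hz⟩)
    · exact absurd hx (by simp)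
    · obtain ⟨rfl⟩ : p = (j, v') := Sum.inl.inj hz
      exact hv
  · intro h
    exact Or.inr ⟨p.1, p.2, h, rfl, by simp⟩

lemma anc_proj {p : Fin K × V} {x : (Fin K × V) ⊕ Unit}
    (h : AncE (mixtureDAG K E W).dir (Sum.inl p) x) :
    ∃ u', x = Sum.inl (p.1, u') ∧ Relation.ReflTransGen (E p.1) p.2 u' := by
  induction h with
  | refl => exact ⟨p.2, by simp, Relation.ReflTransGen.refl⟩
  | tail hs he ih =>
      obtain ⟨u', rfl, hr⟩ := ih
      rcases he with ⟨j, a', b', hE, hx, hz⟩ | ⟨j, v', hv, hx, hz⟩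
      · obtain ⟨h1, h2⟩ : j = p.1 ∧ a' = u' := by
          have := Sum.inl.inj hx; exact ⟨congrArg Prod.fst this.symm, congrArg Prod.snd this.symm⟩
        subst h1; subst h2
        exact ⟨b', hz, hr.tail hE⟩
      · exact absurd hx (by simp)

lemma rtg_antisym {β : Type u} {r : β → β → Prop}
    (hac : ∀ u v, r u v → ¬ Relation.ReflTransGen r v u) {a b : β}
    (h1 : Relation.ReflTransGen r a b) (h2 : Relation.ReflTransGen r b a) : a = b := by
  rcases h1.cases_head with rfl | ⟨c, hrc, hcb⟩
  · rfl
  · exact absurd (hcb.trans h2) (hac a c hrc)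

lemma anc_antisym (hdag : ∀ j, (MixedGraph.mk (E j) (fun _ _ => False)).Acyclic)
    {p q : Fin K × V} (h1 : AncE (mixtureDAG K E W).dir (Sum.inl p) (Sum.inl q))
    (h2 : AncE (mixtureDAG K E W).dir (Sum.inl q) (Sum.inl p)) : p = q := by
  obtain ⟨u', he, hr⟩ := anc_proj h1
  obtain ⟨u'', he', hr'⟩ := anc_proj h2
  have hq : q = (p.1, u') := Sum.inl.inj he
  subst hq
  have hp2 : p.2 = u'' := congrArg Prod.snd (Sum.inl.inj he')
  have hba : Relation.ReflTransGen (E p.1) u' p.2 := by rw [hp2]; exact hr'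
  have h22 : p.2 = u' := rtg_antisym (hdag p.1) hr hba
  exact Prod.ext rfl h22

lemma chPair_mk {p q : Fin K × V} (hp : p.2 ∈ W) (hq : q.2 ∈ W) (hne : p ≠ q) :
    chPair (mixtureDAG K E W).dir p q :=
  ⟨hne, dirY_iff.mpr hp, dirY_iff.mpr hq⟩

lemma mix_hub {p q : Fin K × V} (h : (mixtureMAG K E W).Bid p q) : p.2 ∈ W ∧ q.2 ∈ W := by
  rcases h with ⟨hch, -, -⟩ | ⟨hch, -, -⟩
  · exact ⟨dirY_iff.mp hch.2.1, dirY_iff.mp hch.2.2⟩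
  · exact ⟨dirY_iff.mp hch.2.2, dirY_iff.mp hch.2.1⟩

lemma mix_tri {p q : Fin K × V} (hp : p.2 ∈ W) (hq : q.2 ∈ W) (hne : p ≠ q) :
    (mixtureMAG K E W).Bid p q ∨ (mixtureMAG K E W).dir p q ∨ (mixtureMAG K E W).dir q p := by
  by_cases h1 : AncE (mixtureDAG K E W).dir (Sum.inl p) (Sum.inl q)
  · exact Or.inr (Or.inl (Or.inr (Or.inr ⟨chPair_mk hp hq hne, h1⟩)))
  by_cases h2 : AncE (mixtureDAG K E W).dir (Sum.inl q) (Sum.inl p)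
  · exact Or.inr (Or.inr (Or.inr (Or.inr ⟨chPair_mk hq hp hne.symm, h2⟩)))
  · exact Or.inl (Or.inl ⟨chPair_mk hp hq hne, h1, h2⟩)

lemma mix_dir_anc {p q : Fin K × V} (h : (mixtureMAG K E W).dir p q) :
    AncE (mixtureDAG K E W).dir (Sum.inl p) (Sum.inl q) := by
  rcases h with h | ⟨u', h1, h2, h3⟩ | ⟨h1, h2⟩
  · exact Relation.ReflTransGen.single h
  · exact (Relation.ReflTransGen.single h1).trans h3
  · exact h2

lemma mix_comp (hdag : ∀ j, (MixedGraph.mk (E j) (fun _ _ => False)).Acyclic)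
    {x p q : Fin K × V} (hp : p.2 ∈ W) (hq : q.2 ∈ W) (hpq : p ≠ q)
    (hxp : (mixtureMAG K E W).dir x p) (hpq' : (mixtureMAG K E W).dir p q)
    (hxq : x ≠ q) : (mixtureMAG K E W).dir x q := by
  have hanc : AncE (mixtureDAG K E W).dir (Sum.inl p) (Sum.inl q) := mix_dir_anc hpq'
  rcases hxp with h | ⟨m', h1, h2, h3⟩ | ⟨h1, h2⟩
  · exact Or.inr (Or.inl ⟨p, h, chPair_mk hp hq hpq, hanc⟩)
  · have hmW : m'.2 ∈ W := dirY_iff.mp h2.2.1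
    have hmq : m' ≠ q := by
      intro he; subst he
      exact hpq (anc_antisym hdag hanc h3)
    exact Or.inr (Or.inl ⟨m', h1, chPair_mk hmW hq hmq, h3.trans hanc⟩)
  · have hxW : x.2 ∈ W := dirY_iff.mp h1.2.1
    exact Or.inr (Or.inr ⟨chPair_mk hxW hq hxq, h2.trans hanc⟩)

end Mixture

end AMOBE

/-- Lemma 8, at most one bidirected edge: if there is a d-connecting
path given `[C]` between `a⁽ⁱ⁾` and `b⁽ᵏ⁾` in `M_μ`, then there is one containing at
most one bidirected edge. -/
theorem at_most_one_bidirected_edge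
    {V : Type u} {K : ℕ} (E : Fin K → V → V → Prop)
    (hdag : ∀ j, (MixedGraph.mk (E j) (fun _ _ => False)).Acyclic)
    (W : Set V) (hW : ∀ v, ParentsVary E v → v ∈ W)
    (a b : V) (C : Set V) (haC : a ∉ C) (hbC : b ∉ C)
    (i k : Fin K)
    (w : (mixtureMAG K E W).Walk (i, a) (k, b))
    (hpath : w.IsPath) (hconn : w.DConn (copySet K C)) :
    ∃ w' : (mixtureMAG K E W).Walk (i, a) (k, b),
      w'.IsPath ∧ w'.DConn (copySet K C) ∧ w'.bidirCount ≤ 1 := by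
  exact AMOBE.abstract_surgery {p : Fin K × V | p.2 ∈ W}
    (fun u v h => AMOBE.mix_hub h)
    (fun u v hu hv hne => AMOBE.mix_tri hu hv hne)
    (fun x u v hu hv huv hxu huv' hxv => AMOBE.mix_comp hdag hu hv huv hxu huv' hxv)
    w hpath hconn
end
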